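/- arXiv:2311.07208 — 7 statements merged into one kernel-verified Lean document; each statement's English description precedes it below -/
import Mathlib

section
/- Let X be a Polish space with a bounded compatible complete metric d. For any n ∈ ℕ and points x_0,...,x_{n-1}, y_0,...,y_{n-1} ∈ X, the minimum over permutations σ of {0,...,n-1} of (1/n)·Σ_{i=0}^{n-1} d(x_i, y_{σ(i)}) equals the Kantorovich–Rubinshtein distance γ((1/n)Σδ_{x_i}, (1/n)Σδ_{y_i}), where γ(μ,ν) = sup{|∫f dμ − ∫f dν| : f bounded with Lipschitz constant ≤ 1}. -/
open MeasureTheory Filter Topology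
open scoped ENNReal NNReal

section Defs

variable {X : Type*} [MetricSpace X] [MeasurableSpace X] [BorelSpace X]

/-- Kantorovich–Rubinshtein (dual-Lipschitz) distance between two measures:
the supremum of `|∫ f dμ - ∫ f dν|` over bounded `f` with Lipschitz constant at most `1`. -/
noncomputable def krDist (μ ν : Measure X) : ℝ :=
  sSup { r : ℝ | ∃ f : X → ℝ, LipschitzWith 1 f ∧ (∃ C, ∀ x, |f x| ≤ C) ∧
    r = |∫ x, f x ∂μ - ∫ x, f x ∂ν| }

/-- Empirical measure of the first `n` terms of a sequence (as a plain measure). -/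
noncomputable def empMeas (x : ℕ → X) (n : ℕ) : Measure X :=
  (n : ℝ≥0∞)⁻¹ • ∑ i ∈ Finset.range n, Measure.dirac (x i)

/-- Average of the Dirac measures at the first `max n 1` points of a sequence, as a
probability measure.  For `n ≥ 1` this is the `n`-th empirical measure. -/
noncomputable def avgDirac (x : ℕ → X) (n : ℕ) : ProbabilityMeasure X :=
  ⟨((max n 1 : ℕ) : ℝ≥0∞)⁻¹ • ∑ i ∈ Finset.range (max n 1), Measure.dirac (x i), by
    constructor
    have h : (∑ i ∈ Finset.range (max n 1), Measure.dirac (x i)) Set.univ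
        = ((max n 1 : ℕ) : ℝ≥0∞) := by
      simp [Measure.finset_sum_apply]
    rw [Measure.smul_apply, h, smul_eq_mul]
    exact ENNReal.inv_mul_cancel (by simp) (by simp)⟩

/-- The set of weak* limit points of the empirical measures of a sequence. -/
def limitMeasures (x : ℕ → X) : Set (ProbabilityMeasure X) :=
  { μ | ∃ φ : ℕ → ℕ, StrictMono φ ∧ Tendsto (fun k => avgDirac x (φ k)) atTop (𝓝 μ) }

/-- `x` is a generic point for `μ`: the empirical measures along the orbit of `x`
converge to `μ` in the weak* topology. -/
def genericFor (T : X → X) (x : X) (μ : ProbabilityMeasure X) : Prop :=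
  Tendsto (fun n => avgDirac (fun i => T^[i] x) n) atTop (𝓝 μ)

/-- The invariant measure supported on the periodic orbit of `x` of period `p`. -/
noncomputable def periodicOrbitMeasure (T : X → X) (x : X) (p : ℕ) : ProbabilityMeasure X :=
  avgDirac (fun i => T^[i] x) p

/-- The set of invariant measures supported on periodic orbits of points of `K`. -/
def perMeasures (T : X → X) (K : Set X) : Set (ProbabilityMeasure X) :=
  { μ | ∃ x ∈ K, ∃ p, 0 < p ∧ T^[p] x = x ∧ μ = periodicOrbitMeasure T x p }

/-- The mean orbital pseudo-metric `Ē`. -/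
noncomputable def meanOrbitalDist (T : X → X) (x y : X) : ℝ :=
  limsup (fun n => ⨅ σ : Equiv.Perm (Fin n),
    (∑ i : Fin n, dist (T^[(i : ℕ)] x) (T^[((σ i : Fin n) : ℕ)] y)) / n) atTop

/-- `x` is an asymptotic average pseudo-orbit for `T`. -/
def IsAAPO (T : X → X) (x : ℕ → X) : Prop :=
  Tendsto (fun n => (∑ i ∈ Finset.range n, dist (T (x i)) (x (i + 1))) / n) atTop (𝓝 0)

/-- The point `x` is `K`-closable. -/
def ClosableAt (T : X → X) (K : Set X) (x : X) : Prop :=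
  ∀ ε > (0 : ℝ), ∀ N : ℕ, ∃ p q : ℕ, 0 < p ∧ N ≤ p ∧ p ≤ q ∧ (q : ℝ) ≤ (1 + ε) * p ∧
    ∃ y ∈ K, T^[q] y = y ∧ ∀ i < p, dist (T^[i] y) (T^[i] x) < ε

/-- The set `K ⊆ Per(T)` is linkable. -/
def Linkable (T : X → X) (K : Set X) : Prop :=
  ∀ y₁ ∈ K, ∀ y₂ ∈ K, ∀ ε > (0 : ℝ), ∀ lam ∈ Set.Icc (0 : ℝ) 1,
    ∃ p₁ p₂ q₁ q₂ : ℕ, 0 < p₁ ∧ 0 < p₂ ∧ T^[p₁] y₁ = y₁ ∧ T^[p₂] y₂ = y₂ ∧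
      ∃ z ∈ K, T^[q₂] z = z ∧
        lam - ε ≤ (p₁ : ℝ) / (p₁ + p₂) ∧ (p₁ : ℝ) / (p₁ + p₂) ≤ lam + ε ∧
        p₁ ≤ q₁ ∧ (q₁ : ℝ) ≤ (1 + ε) * p₁ ∧ (∀ i < p₁, dist (T^[i] z) (T^[i] y₁) < ε) ∧
        p₂ ≤ q₂ - q₁ ∧ ((q₂ - q₁ : ℕ) : ℝ) ≤ (1 + ε) * p₂ ∧
        (∀ i < p₂, dist (T^[i + q₁] z) (T^[i] y₂) < ε)

/-- `(X,T)` has the asymptotic orbital average shadowing property. -/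
def AOASP (T : X → X) : Prop :=
  ∀ x : ℕ → X, IsAAPO T x → ∃ z : X,
    Tendsto (fun n => ⨅ σ : Equiv.Perm (Fin n),
      (∑ i : Fin n, dist (x (i : ℕ)) (T^[((σ i : Fin n) : ℕ)] z)) / n) atTop (𝓝 0)

end Defs

/-! A `1`-Lipschitz `f` satisfies `|∑ f(xᵢ) - ∑ f(yᵢ)| ≤ ∑ d(xᵢ, y_{σ i})` for every `σ`, which
gives `krDist ≤ min`. For the converse reindex so that the identity is an optimal matching. Its
optimality says that the reduced costs `w k j = d(x_k, y_j) - d(x_k, y_k)` have nonnegative sum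
along every permutation, hence along every simple cycle; cutting simple cycles out of a walk then
shows that walk weights are bounded below. The least weight `a k` of a walk starting at `k`
satisfies `a k ≤ w k j + a j`, and `f z = min_j (d(z, y_j) + a_j)` is a `1`-Lipschitz function
with `f(x_k) - f(y_k) ≥ d(x_k, y_k)`; truncated outside the finitely many points, it is bounded. -/

theorem List.exists_eq_append_cons_append_cons_of_not_nodup {α : Type*} :
    ∀ {L : List α}, ¬ L.Nodup →
      ∃ s b t u, L = s ++ b :: (t ++ b :: u) ∧ (b :: t).Nodup
  | [], h => absurd List.nodup_nil h
  | x :: L, h => by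
    by_cases hL : L.Nodup
    · obtain ⟨t, u, rfl⟩ := List.append_of_mem (by simpa [List.nodup_cons, hL] using h)
      exact ⟨[], x, t, u, rfl,
        (List.nodup_middle.1 hL).sublist ((List.sublist_append_left t u).cons_cons x)⟩
    · obtain ⟨s, b, t, u, rfl, hbt⟩ := exists_eq_append_cons_append_cons_of_not_nodup hL
      exact ⟨x :: s, b, t, u, rfl, hbt⟩

theorem List.map_formPerm_eq_rotate_one {α : Type*} [DecidableEq α] {L : List α}
    (hL : L.Nodup) : L.map L.formPerm = L.rotate 1 :=
  List.ext_getElem (by simp) fun i _ _ => by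
    simp [List.formPerm_apply_getElem L hL, List.getElem_rotate]

section WalkWeight

variable {ι : Type*} (w : ι → ι → ℝ)

def walkWeight : List ι → ℝ
  | a :: b :: l => w a b + walkWeight (b :: l)
  | _ => 0

@[simp] theorem walkWeight_nil : walkWeight w [] = 0 := rfl

@[simp] theorem walkWeight_singleton (a : ι) : walkWeight w [a] = 0 := rfl

@[simp] theorem walkWeight_cons_cons (a b : ι) (l : List ι) :
    walkWeight w (a :: b :: l) = w a b + walkWeight w (b :: l) := rfl

theorem walkWeight_append_cons (s : List ι) (b : ι) (u : List ι) :
    walkWeight w (s ++ b :: u) = walkWeight w (s ++ [b]) + walkWeight w (b :: u) := by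
  induction s with
  | nil => simp
  | cons a s ih =>
    cases s with
    | nil => simp
    | cons c s =>
      simp only [List.cons_append, walkWeight_cons_cons] at ih ⊢
      rw [ih, add_assoc]

theorem walkWeight_eq_sum_zipWith : ∀ l : List ι, walkWeight w l = (List.zipWith w l l.tail).sum
  | [] => rfl
  | [_] => rfl
  | a :: b :: l => by
    rw [walkWeight_cons_cons, walkWeight_eq_sum_zipWith (b :: l)]
    simp

theorem length_mul_le_walkWeight {m : ℝ} (hm : ∀ i j, m ≤ w i j) (hm0 : m ≤ 0) :
    ∀ l : List ι, l.length * m ≤ walkWeight w l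
  | [] => by simp
  | [_] => by simpa using hm0
  | a :: b :: l => by
    have ih := length_mul_le_walkWeight hm hm0 (b :: l)
    simp only [List.length_cons, Nat.cast_add, Nat.cast_one, walkWeight_cons_cons] at ih ⊢
    linarith [hm a b]

variable [Fintype ι] {w}

theorem walkWeight_simple_cycle_nonneg (hdiag : ∀ k, w k k = 0)
    (hperm : ∀ c : Equiv.Perm ι, 0 ≤ ∑ k, w k (c k)) {b : ι} {t : List ι}
    (hbt : (b :: t).Nodup) : 0 ≤ walkWeight w (b :: t ++ [b]) := by
  classical
  set L := b :: t
  have hcycle : walkWeight w (L ++ [b]) = ∑ k, w k (L.formPerm k) := calc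
    walkWeight w (L ++ [b]) = (List.zipWith w L (L.rotate 1)).sum := by
      have htail : (L ++ [b]).tail = L.rotate 1 ++ [] := by simp [L]
      rw [walkWeight_eq_sum_zipWith, htail, List.zipWith_append (by simp)]
      simp
    _ = ∑ k ∈ L.toFinset, w k (L.formPerm k) := by
      rw [← List.map_formPerm_eq_rotate_one hbt, List.zipWith_map_right, List.zipWith_self,
        List.sum_toFinset _ hbt]
    _ = ∑ k, w k (L.formPerm k) := by
      refine Finset.sum_subset (Finset.subset_univ _) fun k _ hk => ?_
      rw [List.formPerm_apply_of_notMem (by simpa using hk), hdiag]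
  exact hcycle ▸ hperm _

theorem exists_nodup_walkWeight_le (hdiag : ∀ k, w k k = 0)
    (hperm : ∀ c : Equiv.Perm ι, 0 ≤ ∑ k, w k (c k)) (L : List ι) :
    ∃ L' : List ι, L'.Nodup ∧ walkWeight w L' ≤ walkWeight w L := by
  by_cases hL : L.Nodup
  · exact ⟨L, hL, le_rfl⟩
  obtain ⟨s, b, t, u, rfl, hbt⟩ := List.exists_eq_append_cons_append_cons_of_not_nodup hL
  obtain ⟨L', hL', hle⟩ := exists_nodup_walkWeight_le hdiag hperm (s ++ b :: u)
  refine ⟨L', hL', hle.trans ?_⟩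
  have hcycle := walkWeight_simple_cycle_nonneg hdiag hperm hbt
  rw [walkWeight_append_cons w s b u, walkWeight_append_cons w s b (t ++ b :: u),
    ← List.cons_append, walkWeight_append_cons w (b :: t) b u]
  linarith
termination_by L.length
decreasing_by subst_vars; simp

theorem exists_potential_of_sum_perm_nonneg (hdiag : ∀ k, w k k = 0)
    (hperm : ∀ c : Equiv.Perm ι, 0 ≤ ∑ k, w k (c k)) :
    ∃ a : ι → ℝ, ∀ k j, a k ≤ w k j + a j := by
  obtain ⟨m, hm⟩ := (Set.finite_range (Function.uncurry w)).bddBelow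
  have hm' : ∀ i j, min m 0 ≤ w i j := fun i j => (min_le_left _ _).trans (hm ⟨(i, j), rfl⟩)
  have hbdd : ∀ k, BddBelow (Set.range fun l => walkWeight w (k :: l)) := by
    refine fun k => ⟨Fintype.card ι * min m 0, ?_⟩
    rintro _ ⟨l, rfl⟩
    obtain ⟨L, hL, hle⟩ := exists_nodup_walkWeight_le hdiag hperm (k :: l)
    calc (Fintype.card ι : ℝ) * min m 0 ≤ L.length * min m 0 :=
          mul_le_mul_of_nonpos_right (by exact_mod_cast hL.length_le_card) (min_le_right _ _)
      _ ≤ walkWeight w L := length_mul_le_walkWeight w hm' (min_le_right _ _) L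
      _ ≤ _ := hle
  refine ⟨fun k => ⨅ l, walkWeight w (k :: l), fun k j => ?_⟩
  rw [← sub_le_iff_le_add']
  refine le_ciInf fun l => ?_
  have hwalk := ciInf_le (hbdd k) (j :: l)
  rw [walkWeight_cons_cons] at hwalk
  linarith

end WalkWeight

section Matching

variable {X ι : Type*} [PseudoMetricSpace X] [Fintype ι]

theorem abs_sum_sub_sum_le_sum_dist {f : X → ℝ} (hf : LipschitzWith 1 f) (x y : ι → X)
    (σ : Equiv.Perm ι) : |∑ i, f (x i) - ∑ i, f (y i)| ≤ ∑ i, dist (x i) (y (σ i)) := by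
  rw [← Equiv.sum_comp σ (fun i => f (y i)), ← Finset.sum_sub_distrib]
  refine (Finset.abs_sum_le_sum_abs _ _).trans (Finset.sum_le_sum fun i _ => ?_)
  simpa [Real.dist_eq] using hf.dist_le_mul (x i) (y (σ i))

theorem LipschitzWith.exists_bounded_eqOn {K : ℝ≥0} {f : X → ℝ} (hf : LipschitzWith K f)
    {s : Set X} (hs : s.Finite) :
    ∃ g : X → ℝ, LipschitzWith K g ∧ (∃ C, ∀ z, |g z| ≤ C) ∧ Set.EqOn g f s := by
  obtain ⟨lo, hlo⟩ := (hs.image f).bddBelow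
  obtain ⟨hi, hhi⟩ := (hs.image f).bddAbove
  refine ⟨fun z => max lo (min (f z) hi), (hf.min_const hi).const_max lo,
    ⟨|lo| + |hi|, fun z => abs_le.2 ⟨?_, ?_⟩⟩, fun z hz => ?_⟩
  · linarith [le_max_left lo (min (f z) hi), neg_abs_le lo, abs_nonneg hi]
  · exact max_le (by linarith [le_abs_self lo, abs_nonneg hi])
      ((min_le_right _ _).trans (by linarith [le_abs_self hi, abs_nonneg lo]))
  · simp [min_eq_left (hhi ⟨z, hz, rfl⟩), max_eq_right (hlo ⟨z, hz, rfl⟩)]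

theorem exists_lipschitzWith_sum_dist_le_of_forall_le (x y : ι → X)
    (hopt : ∀ τ : Equiv.Perm ι, ∑ i, dist (x i) (y i) ≤ ∑ i, dist (x i) (y (τ i))) :
    ∃ f : X → ℝ, LipschitzWith 1 f ∧
      ∑ i, dist (x i) (y i) ≤ ∑ i, f (x i) - ∑ i, f (y i) := by
  cases isEmpty_or_nonempty ι
  · exact ⟨fun _ => 0, LipschitzWith.const' 0, by simp⟩
  obtain ⟨a, ha⟩ := exists_potential_of_sum_perm_nonneg
    (w := fun k j => dist (x k) (y j) - dist (x k) (y k)) (fun k => sub_self _)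
    fun c => by simpa [Finset.sum_sub_distrib] using hopt c
  set f : X → ℝ := Finset.univ.inf' Finset.univ_nonempty fun j z => dist z (y j) + a j
  have hf : ∀ z, f z = Finset.univ.inf' Finset.univ_nonempty fun j => dist z (y j) + a j :=
    Finset.inf'_apply _ _
  have hfx : ∀ k, dist (x k) (y k) + a k ≤ f (x k) := fun k => by
    rw [hf]
    exact Finset.le_inf' _ _ fun j _ => by linarith [ha k j]
  have hfy : ∀ k, f (y k) ≤ a k := fun k =>
    (hf _).trans_le ((Finset.inf'_le _ (Finset.mem_univ k)).trans_eq (by simp))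
  have hlip : LipschitzWith 1 f := Finset.inf'_induction _ _
    (fun g hg h hh => (by simpa using hg.min hh : LipschitzWith 1 fun z => min (g z) (h z)))
    fun j _ => by simpa using (LipschitzWith.dist_left (y j)).add (LipschitzWith.const (a j))
  refine ⟨f, hlip, ?_⟩
  have hx := Finset.sum_le_sum fun k (_ : k ∈ Finset.univ) => hfx k
  have hy := Finset.sum_le_sum fun k (_ : k ∈ Finset.univ) => hfy k
  rw [Finset.sum_add_distrib] at hx
  linarith

theorem exists_perm_lipschitzWith_sum_dist_le (x y : ι → X) :
    ∃ σ : Equiv.Perm ι, ∃ f : X → ℝ, LipschitzWith 1 f ∧ (∃ C, ∀ z, |f z| ≤ C) ∧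
      ∑ i, dist (x i) (y (σ i)) ≤ ∑ i, f (x i) - ∑ i, f (y i) := by
  obtain ⟨σ, hσ⟩ := Finite.exists_min fun σ : Equiv.Perm ι => ∑ i, dist (x i) (y (σ i))
  obtain ⟨f, hf, hsum⟩ := exists_lipschitzWith_sum_dist_le_of_forall_le x (y ∘ σ)
    fun τ => by simpa using hσ (τ.trans σ)
  obtain ⟨g, hg, hgb, hgf⟩ :=
    hf.exists_bounded_eqOn ((Set.finite_range x).union (Set.finite_range y))
  refine ⟨σ, g, hg, hgb, ?_⟩
  rw [Finset.sum_congr rfl fun i _ => hgf (Or.inl ⟨i, rfl⟩),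
    Finset.sum_congr rfl fun i _ => hgf (Or.inr ⟨i, rfl⟩),
    ← Equiv.sum_comp σ (fun i => f (y i))]
  exact hsum

end Matching

theorem integral_smul_finset_sum_dirac {X ι : Type*} [MeasurableSpace X]
    [MeasurableSingletonClass X] (c : ℝ≥0∞) (s : Finset ι) (z : ι → X) (f : X → ℝ) :
    ∫ a, f a ∂(c • ∑ i ∈ s, Measure.dirac (z i)) = c.toReal * ∑ i ∈ s, f (z i) := by
  rw [integral_smul_measure, integral_finsetSum_measure fun i _ => integrable_dirac (by simp)]
  simp [integral_dirac]

theorem stmt0_general {X : Type*} [MetricSpace X] [MeasurableSpace X] [BorelSpace X]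
    (n : ℕ) (x y : Fin n → X) :
    (⨅ σ : Equiv.Perm (Fin n), (∑ i : Fin n, dist (x i) (y (σ i))) / n)
      = krDist ((n : ℝ≥0∞)⁻¹ • ∑ i : Fin n, Measure.dirac (x i))
          ((n : ℝ≥0∞)⁻¹ • ∑ i : Fin n, Measure.dirac (y i)) := by
  set μ : Measure X := (n : ℝ≥0∞)⁻¹ • ∑ i : Fin n, Measure.dirac (x i)
  set ν : Measure X := (n : ℝ≥0∞)⁻¹ • ∑ i : Fin n, Measure.dirac (y i)
  have hint : ∀ f : X → ℝ,
      ∫ a, f a ∂μ - ∫ a, f a ∂ν = (∑ i, f (x i) - ∑ i, f (y i)) / n := fun f => by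
    simp only [μ, ν, integral_smul_finset_sum_dirac, ENNReal.toReal_inv,
      ENNReal.toReal_natCast]
    ring
  have hle : ∀ f : X → ℝ, LipschitzWith 1 f → ∀ σ : Equiv.Perm (Fin n),
      |∫ a, f a ∂μ - ∫ a, f a ∂ν| ≤ (∑ i, dist (x i) (y (σ i))) / n := by
    intro f hf σ
    rw [hint, abs_div, Nat.abs_cast]
    exact div_le_div_of_nonneg_right (abs_sum_sub_sum_le_sum_dist hf x y σ) n.cast_nonneg
  obtain ⟨σ₀, f₀, hf₀, hf₀b, hσ₀⟩ := exists_perm_lipschitzWith_sum_dist_le x y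
  have hge :
      (∑ i, dist (x i) (y (σ₀ i))) / n ≤ |∫ a, f₀ a ∂μ - ∫ a, f₀ a ∂ν| := by
    rw [hint]
    exact le_abs.2 (Or.inl (div_le_div_of_nonneg_right hσ₀ n.cast_nonneg))
  have hinf : (⨅ σ : Equiv.Perm (Fin n), (∑ i, dist (x i) (y (σ i))) / n)
      = (∑ i, dist (x i) (y (σ₀ i))) / n :=
    le_antisymm (ciInf_le (Finite.bddBelow_range _) σ₀)
      (le_ciInf fun σ => hge.trans (hle f₀ hf₀ σ))
  rw [hinf, krDist]
  refine (IsGreatest.csSup_eq ?_).symm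
  refine ⟨⟨f₀, hf₀, hf₀b, le_antisymm hge (hle f₀ hf₀ σ₀)⟩, ?_⟩
  rintro _ ⟨f, hf, -, rfl⟩
  exact hle f hf σ₀

theorem stmt0 {X : Type*} [MetricSpace X] [TopologicalSpace.SeparableSpace X]
    [CompleteSpace X] [MeasurableSpace X] [BorelSpace X]
    (hd : ∃ C, ∀ a b : X, dist a b ≤ C)
    (n : ℕ) (hn : 0 < n) (x y : Fin n → X) :
    (⨅ σ : Equiv.Perm (Fin n), (∑ i : Fin n, dist (x i) (y (σ i))) / n)
      = krDist ((n : ℝ≥0∞)⁻¹ • ∑ i : Fin n, Measure.dirac (x i))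
          ((n : ℝ≥0∞)⁻¹ • ∑ i : Fin n, Measure.dirac (y i)) :=
  stmt0_general n x y
end

section
/- Let (X,T) be a Polish dynamical system with bounded compatible complete metric d. For all x,y ∈ X, the mean orbital pseudo-metric satisfies Ē(x,y) = limsup_{n→∞} γ(m_T(x,n), m_T(y,n)), where m_T(x,n) = (1/n)Σ_{i=0}^{n-1} δ_{T^i x} is the n-th empirical measure and γ is the Kantorovich–Rubinshtein metric. -/
open MeasureTheory Filter Topology
open scoped ENNReal NNReal

/-!
For `n ≥ 1` the two sequences agree term by term: the Kantorovich–Rubinshtein distance of two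
`n`-point empirical measures is the optimal assignment cost `min_σ (1/n) ∑ d(uᵢ, w_{σ i})`.
A `1`-Lipschitz test function is bounded by the cost of every assignment. Conversely, an optimal
assignment `σ₀` admits no improving cycle, so with `b = w ∘ σ₀` the reduced costs
`d(uᵢ, bⱼ) - d(uⱼ, bⱼ)` admit a potential (the cost of a cheapest simple path). Its `c`-transform
`z ↦ minⱼ (ψⱼ + d(z, bⱼ))`, truncated from above to make it bounded, is `1`-Lipschitz and its
integrals realise the optimal cost.
-/

section PathCost

variable {ι : Type*}

def pathCost (r : ι → ι → ℝ) : List ι → ℝ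
  | [] => 0
  | [_] => 0
  | a :: b :: l => r a b + pathCost r (b :: l)

@[simp] lemma pathCost_singleton (r : ι → ι → ℝ) (a : ι) : pathCost r [a] = 0 := rfl

@[simp] lemma pathCost_cons_cons (r : ι → ι → ℝ) (a b : ι) (l : List ι) :
    pathCost r (a :: b :: l) = r a b + pathCost r (b :: l) := rfl

lemma pathCost_append_singleton (r : ι → ι → ℝ) {i : ι} (j : ι) :
    ∀ {l : List ι}, l.getLast? = some i → pathCost r (l ++ [j]) = pathCost r l + r i j
  | [_], h => by simp_all
  | a :: b :: l, h => by
    simp only [List.cons_append, pathCost_cons_cons] at h ⊢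
    rw [← List.cons_append, pathCost_append_singleton r j (by simpa using h)]
    ring

lemma pathCost_append_cons (r : ι → ι → ℝ) (j : ι) :
    ∀ l₁ l₂ : List ι, pathCost r (l₁ ++ j :: l₂) = pathCost r (l₁ ++ [j]) + pathCost r (j :: l₂)
  | [], _ => by simp
  | [_], _ => by simp
  | a :: b :: l₁, l₂ => by
    simp only [List.cons_append, pathCost_cons_cons]
    rw [← List.cons_append, ← List.cons_append, pathCost_append_cons r j (b :: l₁) l₂]
    ring

lemma pathCost_eq_sum (r : ι → ι → ℝ) :
    ∀ (m : ℕ) (l : List ι) (hl : l.length = m + 1),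
      pathCost r l = ∑ k : Fin m, r l[(k : ℕ)] l[(k : ℕ) + 1]
  | 0, [_], _ => by simp
  | m + 1, a :: b :: l, hl => by
    rw [pathCost_cons_cons, pathCost_eq_sum r m (b :: l) (by simpa using hl), Fin.sum_univ_succ]
    simp

lemma sum_formPerm_eq_pathCost_add [Fintype ι] [DecidableEq ι] (r : ι → ι → ℝ)
    (hr : ∀ i, r i i = 0) {a b : ι} {t : List ι} (hnd : (a :: t).Nodup)
    (hlast : (a :: t).getLast? = some b) :
    ∑ i, r i ((a :: t).formPerm i) = pathCost r (a :: t) + r b a := by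
  set l := a :: t
  have hoff : ∀ i ∉ l.toFinset, r i (l.formPerm i) = 0 := fun i hi => by
    rw [List.formPerm_apply_of_notMem (by simpa using hi), hr]
  rw [← Finset.sum_subset (Finset.subset_univ _) fun i _ hi => hoff i hi,
    List.sum_toFinset _ hnd, ← Fin.sum_univ_fun_getElem]
  change ∑ k : Fin (t.length + 1), _ = _
  rw [Fin.sum_univ_castSucc, pathCost_eq_sum r t.length l rfl]
  congr 1
  · refine Finset.sum_congr rfl fun k _ => ?_
    have hk : ((k : ℕ) + 1) % l.length = k + 1 := Nat.mod_eq_of_lt (Nat.succ_lt_succ k.isLt)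
    simp only [Fin.val_castSucc, List.formPerm_apply_getElem _ hnd, hk]
  · rw [List.formPerm_apply_getElem _ hnd]
    simp [l, List.getLast?_eq_getElem?] at hlast ⊢
    simp [hlast]

lemma exists_potential_of_sum_perm_nonneg_s1 [Fintype ι] (r : ι → ι → ℝ) (hr : ∀ i, r i i = 0)
    (hcyc : ∀ τ : Equiv.Perm ι, 0 ≤ ∑ i, r i (τ i)) :
    ∃ v : ι → ℝ, ∀ i j, v j ≤ v i + r i j := by
  classical
  let P : ι → Set (List ι) := fun j => {l | l.Nodup ∧ l.getLast? = some j}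
  have hfin : ∀ j, (P j).Finite := fun j =>
    (List.finite_length_le ι (Fintype.card ι)).subset fun l hl => hl.1.length_le_card
  have hne : ∀ j, (P j).Nonempty := fun j => ⟨[j], by simp [P]⟩
  choose L hL hLmin using fun j => (P j).exists_min_image (pathCost r) (hfin j) (hne j)
  refine ⟨fun j => pathCost r (L j), fun i j => ?_⟩
  show pathCost r (L j) ≤ pathCost r (L i) + r i j
  obtain ⟨hnd, hlast⟩ := hL i
  by_cases hj : j ∈ L i
  · obtain ⟨L₁, L₂, hsplit⟩ := List.append_of_mem hj
    rw [hsplit] at hnd hlast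
    have hpre : pathCost r (L j) ≤ pathCost r (L₁ ++ [j]) :=
      hLmin j _ ⟨hnd.sublist (by simp), by simp⟩
    -- closing `j :: L₂` up by the edge `i → j` gives a cycle, which has nonnegative cost
    have hcycle : 0 ≤ pathCost r (j :: L₂) + r i j := by
      rw [← sum_formPerm_eq_pathCost_add r hr (hnd.sublist (by simp)) (by simpa using hlast)]
      exact hcyc _
    rw [hsplit, pathCost_append_cons]
    linarith
  · have hext := hLmin j _ ⟨hnd.append (List.nodup_singleton j) (by simpa using hj), by simp⟩
    rwa [pathCost_append_singleton r j hlast] at hext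

end PathCost

section Kantorovich
variable {X ι : Type*} [PseudoMetricSpace X] [Fintype ι]

lemma abs_sum_sub_sum_le_sum_dist_perm {f : X → ℝ} (hf : LipschitzWith 1 f) (a b : ι → X)
    (σ : Equiv.Perm ι) : |∑ i, f (a i) - ∑ i, f (b i)| ≤ ∑ i, dist (a i) (b (σ i)) := by
  rw [← Equiv.sum_comp σ fun i => f (b i), ← Finset.sum_sub_distrib]
  refine (Finset.abs_sum_le_sum_abs _ _).trans (Finset.sum_le_sum fun i _ => ?_)
  simpa [Real.dist_eq] using hf.dist_le_mul (a i) (b (σ i))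

lemma exists_bounded_lipschitz_of_sub_le_dist [Nonempty ι] (a b : ι → X) (φ ψ : ι → ℝ)
    (h : ∀ i j, φ i - ψ j ≤ dist (a i) (b j)) :
    ∃ f : X → ℝ, LipschitzWith 1 f ∧ (∃ C, ∀ z, |f z| ≤ C) ∧
      (∀ i, φ i ≤ f (a i)) ∧ ∀ j, f (b j) ≤ ψ j := by
  let g : X → ℝ := fun z => Finset.univ.inf' Finset.univ_nonempty fun j => ψ j + dist z (b j)
  let m := Finset.univ.inf' Finset.univ_nonempty ψ
  let M := Finset.univ.sup' Finset.univ_nonempty φ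
  have hg : LipschitzWith 1 g := LipschitzWith.of_le_add fun z z' => by
    obtain ⟨j, -, hj⟩ :=
      Finset.exists_mem_eq_inf' Finset.univ_nonempty fun j => ψ j + dist z' (b j)
    have := Finset.inf'_le (fun j => ψ j + dist z (b j)) (Finset.mem_univ j)
    linarith [dist_triangle z z' (b j)]
  have hmg : ∀ z, m ≤ g z := fun z => Finset.le_inf' _ _ fun j _ =>
    (Finset.inf'_le ψ (Finset.mem_univ j)).trans (le_add_of_nonneg_right dist_nonneg)
  refine ⟨fun z => min (g z) M, hg.min_const M, ⟨|m| + |M|, fun z => ?_⟩, fun i => ?_, fun j => ?_⟩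
  · show |min (g z) M| ≤ _
    rw [abs_le]
    exact ⟨le_min (by linarith [hmg z, neg_abs_le m, abs_nonneg M])
      (by linarith [neg_abs_le M, abs_nonneg m]),
      (min_le_right _ _).trans (by linarith [le_abs_self M, abs_nonneg m])⟩
  · exact le_min (Finset.le_inf' _ _ fun j _ => by linarith [h i j])
      (Finset.le_sup' φ (Finset.mem_univ i))
  · refine (min_le_left _ _).trans ?_
    simpa using Finset.inf'_le (fun j' => ψ j' + dist (b j) (b j')) (Finset.mem_univ j)

lemma exists_bounded_lipschitz_sum_dist_le_of_forall_perm [Nonempty ι] (a b : ι → X)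
    (hopt : ∀ τ : Equiv.Perm ι, ∑ i, dist (a i) (b i) ≤ ∑ i, dist (a i) (b (τ i))) :
    ∃ f : X → ℝ, LipschitzWith 1 f ∧ (∃ C, ∀ z, |f z| ≤ C) ∧
      ∑ i, dist (a i) (b i) ≤ ∑ i, f (a i) - ∑ i, f (b i) := by
  obtain ⟨v, hv⟩ := exists_potential_of_sum_perm_nonneg_s1
    (fun i j => dist (a i) (b j) - dist (a j) (b j)) (fun i => sub_self _) fun τ => by
      rw [Finset.sum_sub_distrib, Equiv.sum_comp τ fun j => dist (a j) (b j)]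
      linarith [hopt τ]
  obtain ⟨f, hf, hbdd, hfa, hfb⟩ := exists_bounded_lipschitz_of_sub_le_dist a b
    (fun i => -v i) (fun j => -(dist (a j) (b j) + v j)) fun i j => by linarith [hv i j]
  refine ⟨f, hf, hbdd, ?_⟩
  have ha := Finset.sum_le_sum fun i (_ : i ∈ Finset.univ) => hfa i
  have hb := Finset.sum_le_sum fun j (_ : j ∈ Finset.univ) => hfb j
  simp only [Finset.sum_neg_distrib, Finset.sum_add_distrib] at ha hb
  linarith

end Kantorovich

lemma integral_empMeas {X : Type*} [MeasurableSpace X] [MeasurableSingletonClass X]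
    (u : ℕ → X) (n : ℕ) (f : X → ℝ) :
    ∫ z, f z ∂empMeas u n = (∑ i ∈ Finset.range n, f (u i)) / n := by
  rw [empMeas, integral_smul_measure,
    integral_finsetSum_measure fun i _ => integrable_dirac enorm_lt_top]
  simp [integral_dirac, ENNReal.toReal_inv, div_eq_inv_mul]

lemma krDist_empMeas_eq_iInf {X : Type*} [MetricSpace X] [MeasurableSpace X] [BorelSpace X]
    (u w : ℕ → X) {n : ℕ} (hn : 0 < n) :
    krDist (empMeas u n) (empMeas w n)
      = ⨅ σ : Equiv.Perm (Fin n), (∑ i : Fin n, dist (u i) (w (σ i))) / n := by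
  have : Nonempty (Fin n) := ⟨⟨0, hn⟩⟩
  have hdiff : ∀ f : X → ℝ, |∫ z, f z ∂empMeas u n - ∫ z, f z ∂empMeas w n|
      = |∑ i : Fin n, f (u i) - ∑ i : Fin n, f (w i)| / n := fun f => by
    rw [integral_empMeas, integral_empMeas, ← sub_div, abs_div, Nat.abs_cast,
      ← Fin.sum_univ_eq_sum_range (fun i => f (u i)),
      ← Fin.sum_univ_eq_sum_range (fun i => f (w i))]
  obtain ⟨σ₀, hσ₀⟩ :=
    Finite.exists_min fun σ : Equiv.Perm (Fin n) => ∑ i : Fin n, dist (u i) (w (σ i))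
  obtain ⟨f, hf, hbdd, hfσ₀⟩ := exists_bounded_lipschitz_sum_dist_le_of_forall_perm
    (fun i : Fin n => u i) (fun i => w (σ₀ i)) fun τ => hσ₀ (σ₀ * τ)
  rw [Equiv.sum_comp σ₀ fun i => f (w i)] at hfσ₀
  set c := ⨅ σ : Equiv.Perm (Fin n), (∑ i : Fin n, dist (u i) (w (σ i))) / n
  have hub : ∀ g : X → ℝ, LipschitzWith 1 g →
      |∫ z, g z ∂empMeas u n - ∫ z, g z ∂empMeas w n| ≤ c :=
    fun g hg => le_ciInf fun σ => by
      rw [hdiff]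
      gcongr
      exact abs_sum_sub_sum_le_sum_dist_perm hg _ _ σ
  rw [krDist]
  apply le_antisymm
  · refine csSup_le ⟨_, f, hf, hbdd, rfl⟩ ?_
    rintro r ⟨g, hg, -, rfl⟩
    exact hub g hg
  · refine le_csSup_of_le ?_ ⟨f, hf, hbdd, rfl⟩ ?_
    · refine ⟨c, ?_⟩
      rintro r ⟨g, hg, -, rfl⟩
      exact hub g hg
    · refine (ciInf_le (Set.finite_range _).bddBelow σ₀).trans ?_
      rw [hdiff]
      gcongr
      exact hfσ₀.trans (le_abs_self _)

theorem stmt1_general {X : Type*} [MetricSpace X] [MeasurableSpace X] [BorelSpace X]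
    (T : X → X) (x y : X) :
    meanOrbitalDist T x y
      = limsup (fun n => krDist (empMeas (fun i => T^[i] x) n)
          (empMeas (fun i => T^[i] y) n)) atTop :=
  limsup_congr <| (eventually_gt_atTop 0).mono fun _ hn =>
    (krDist_empMeas_eq_iInf (fun i => T^[i] x) (fun i => T^[i] y) hn).symm

theorem stmt1 {X : Type*} [MetricSpace X] [TopologicalSpace.SeparableSpace X]
    [CompleteSpace X] [MeasurableSpace X] [BorelSpace X]
    (hd : ∃ C, ∀ a b : X, dist a b ≤ C)
    (T : X → X) (hT : Continuous T) (x y : X) :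
    meanOrbitalDist T x y
      = limsup (fun n => krDist (empMeas (fun i => T^[i] x) n)
          (empMeas (fun i => T^[i] y) n)) atTop :=
  stmt1_general T x y
end

section
/- Let (X,T) be a Polish dynamical system. The set Q_T(X) of quasi-regular points (points x for which the empirical measures m_T(x,n) converge in the weak* topology) is closed with respect to the mean orbital pseudo-metric Ē; i.e., if x_k ∈ Q_T(X) and Ē(x_k, x) → 0, then x ∈ Q_T(X). -/
open MeasureTheory Filter Topology
open scoped ENNReal NNReal

/-! Empirical measures are compared in the Lévy–Prokhorov metric, which metrizes weak*
convergence of probability measures on a separable space. If `Ē(y, x) < ε²`, then for large `n`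
some permutation matches the first `n` points of the two orbits with total cost `< ε² n`; by
Markov's inequality at most `ε n` matched pairs are `ε`-apart, so the `n`-th empirical measures
are `ε`-close. Hence the empirical measures of `x` are uniformly approximated by the convergent,
hence Cauchy, empirical measures of the `x_k`, and are Cauchy themselves. They converge because
the Lévy–Prokhorov space over a Polish space is complete: a Cauchy sequence of probability
measures is tight, so by Prokhorov's theorem it has a cluster point. -/

open Metric Set

section Tightness

variable {X : Type*} [PseudoMetricSpace X]

theorem totallyBounded_of_forall_subset_thickening {s : Set X}
    (h : ∀ δ > 0, ∃ C : Set X, IsCompact C ∧ s ⊆ thickening δ C) : TotallyBounded s := by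
  refine totallyBounded_iff.2 fun δ hδ => ?_
  obtain ⟨C, hC, hsC⟩ := h (δ / 2) (half_pos hδ)
  obtain ⟨t, -, ht, hCt⟩ := hC.finite_cover_balls (half_pos hδ)
  refine ⟨t, ht, fun x hx => ?_⟩
  obtain ⟨c, hc, hxc⟩ := mem_thickening_iff.1 (hsC hx)
  obtain ⟨y, hy, hcy⟩ := mem_iUnion₂.1 (hCt hc)
  exact mem_iUnion₂.2 ⟨y, hy, mem_ball.2 <| by
    linarith [dist_triangle x c y, mem_ball.1 hcy]⟩

variable [MeasurableSpace X]

theorem isTightMeasureSet_of_forall_measure_compl_thickening_le [CompleteSpace X]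
    {S : Set (Measure X)}
    (h : ∀ r > 0, ∀ ε > 0, ∃ C : Set X, IsCompact C ∧
      ∀ μ ∈ S, μ (thickening r C)ᶜ ≤ ENNReal.ofReal ε) :
    IsTightMeasureSet S := by
  rw [isTightMeasureSet_iff_exists_isCompact_measure_compl_le]
  intro ε hε
  obtain ⟨ε', hε'pos, hε'sum⟩ := ENNReal.exists_pos_sum_of_countable hε.ne' ℕ
  choose C hC hCμ using fun m : ℕ => h (1 / (m + 1)) Nat.one_div_pos_of_nat (ε' m) (hε'pos m)
  refine ⟨⋂ m : ℕ, cthickening (1 / (m + 1)) (C m), ?_, fun μ hμ => ?_⟩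
  · refine TotallyBounded.isCompact_of_isClosed ?_ (isClosed_iInter fun m => isClosed_cthickening)
    refine totallyBounded_of_forall_subset_thickening fun δ hδ => ?_
    obtain ⟨m, hm⟩ := exists_nat_one_div_lt hδ
    exact ⟨C m, hC m, (iInter_subset _ m).trans
      (cthickening_subset_thickening' hδ hm _)⟩
  · calc μ (⋂ m : ℕ, cthickening (1 / (m + 1)) (C m))ᶜ
        ≤ ∑' m : ℕ, μ (thickening (1 / (m + 1)) (C m))ᶜ := by
          rw [compl_iInter]
          refine (measure_mono (iUnion_mono fun m => ?_)).trans (measure_iUnion_le _)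
          exact compl_subset_compl.2 (thickening_subset_cthickening _ _)
      _ ≤ ∑' m, (ε' m : ℝ≥0∞) :=
          ENNReal.tsum_le_tsum fun m => (hCμ m μ hμ).trans_eq ENNReal.ofReal_coe_nnreal
      _ ≤ ε := hε'sum.le

end Tightness

section Completeness

variable {X : Type*} [MetricSpace X] [MeasurableSpace X] [BorelSpace X]

theorem measure_compl_thickening_le_of_levyProkhorovEDist_lt {μ ν : Measure X} {e : ℝ}
    (h : levyProkhorovEDist μ ν < ENNReal.ofReal e) (C : Set X) :
    μ (thickening e C)ᶜ ≤ ν Cᶜ + ENNReal.ofReal e := by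
  have he : 0 < e := ENNReal.ofReal_pos.1 (pos_of_gt h)
  have hB := left_measure_le_of_levyProkhorovEDist_lt h (B := (thickening e C)ᶜ)
    isOpen_thickening.measurableSet.compl
  rw [ENNReal.toReal_ofReal he.le] at hB
  refine hB.trans (add_le_add_left (measure_mono fun z hz hzC => ?_) _)
  obtain ⟨w, hw, hzw⟩ := mem_thickening_iff.1 hz
  exact hw (mem_thickening_iff.2 ⟨z, hzC, by rwa [dist_comm]⟩)

variable [TopologicalSpace.SeparableSpace X] [CompleteSpace X]

theorem isTightMeasureSet_range_of_cauchySeq {u : ℕ → LevyProkhorov (ProbabilityMeasure X)}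
    (hu : CauchySeq u) : IsTightMeasureSet (range fun k => ((u k).toMeasure : Measure X)) := by
  refine isTightMeasureSet_of_forall_measure_compl_thickening_le fun r hr ε hε => ?_
  set e := min r (ε / 2)
  obtain ⟨N, hN⟩ := Metric.cauchySeq_iff'.1 hu e (by positivity)
  -- a finite family of probability measures is tight because its sum is
  obtain ⟨C, hC, hCN⟩ := isTightMeasureSet_iff_exists_isCompact_measure_compl_le.1
    (isTightMeasureSet_singleton (μ := ∑ j ∈ Finset.range (N + 1), ((u j).toMeasure : Measure X)))
    (ENNReal.ofReal (ε / 2)) (by positivity)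
  have hle : ∀ j ≤ N, ((u j).toMeasure : Measure X) Cᶜ ≤ ENNReal.ofReal (ε / 2) := fun j hj =>
    calc ((u j).toMeasure : Measure X) Cᶜ
        ≤ ∑ j ∈ Finset.range (N + 1), ((u j).toMeasure : Measure X) Cᶜ :=
          Finset.single_le_sum (f := fun j => ((u j).toMeasure : Measure X) Cᶜ)
            (fun _ _ => zero_le) (Finset.mem_range_succ_iff.2 hj)
      _ ≤ ENNReal.ofReal (ε / 2) := by
          rw [← Measure.finsetSum_apply]; exact hCN _ rfl
  refine ⟨C, hC, ?_⟩
  rintro _ ⟨k, rfl⟩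
  rcases le_total k N with hk | hk
  · calc ((u k).toMeasure : Measure X) (thickening r C)ᶜ ≤ ((u k).toMeasure : Measure X) Cᶜ :=
          measure_mono (compl_subset_compl.2 (self_subset_thickening hr C))
      _ ≤ ENNReal.ofReal ε := (hle k hk).trans (ENNReal.ofReal_le_ofReal (by linarith))
  · have hkN : levyProkhorovEDist ((u k).toMeasure : Measure X) (u N).toMeasure
        < ENNReal.ofReal e := by
      rw [← LevyProkhorov.edist_probabilityMeasure_def, edist_lt_ofReal]; exact hN k hk
    calc ((u k).toMeasure : Measure X) (thickening r C)ᶜ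
        ≤ ((u k).toMeasure : Measure X) (thickening e C)ᶜ :=
          measure_mono (compl_subset_compl.2 (thickening_mono (min_le_left _ _) C))
      _ ≤ ((u N).toMeasure : Measure X) Cᶜ + ENNReal.ofReal e :=
          measure_compl_thickening_le_of_levyProkhorovEDist_lt hkN C
      _ ≤ ENNReal.ofReal (ε / 2) + ENNReal.ofReal (ε / 2) :=
          add_le_add (hle N le_rfl) (ENNReal.ofReal_le_ofReal (min_le_right _ _))
      _ = ENNReal.ofReal ε := by
          rw [← ENNReal.ofReal_add (by positivity) (by positivity), add_halves]

instance LevyProkhorov.instCompleteSpaceProbabilityMeasure :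
    CompleteSpace (LevyProkhorov (ProbabilityMeasure X)) := by
  refine Metric.complete_of_cauchySeq_tendsto fun u hu => ?_
  have hK : IsCompact (LevyProkhorov.probabilityMeasureHomeomorph ''
      closure (range fun k => (u k).toMeasure)) := by
    refine (isCompact_closure_of_isTightMeasureSet ?_).image
      LevyProkhorov.probabilityMeasureHomeomorph.continuous
    change IsTightMeasureSet (((↑) : ProbabilityMeasure X → Measure X) '' range _)
    rw [← range_comp]
    exact isTightMeasureSet_range_of_cauchySeq hu
  obtain ⟨a, -, ha⟩ := cauchySeq_tendsto_of_isComplete hK.isComplete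
    (fun k => ⟨(u k).toMeasure, subset_closure (mem_range_self k), rfl⟩) hu
  exact ⟨a, ha⟩

end Completeness

theorem cauchySeq_of_forall_eventually_dist_le {α : Type*} [PseudoMetricSpace α] {u : ℕ → α}
    (h : ∀ ε > 0, ∃ v : ℕ → α, CauchySeq v ∧ ∀ᶠ n in atTop, dist (u n) (v n) ≤ ε) :
    CauchySeq u := by
  refine Metric.cauchySeq_iff.2 fun ε hε => ?_
  obtain ⟨v, hv, huv⟩ := h (ε / 4) (by positivity)
  obtain ⟨N₁, hN₁⟩ := Metric.cauchySeq_iff.1 hv (ε / 2) (by positivity)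
  obtain ⟨N₂, hN₂⟩ := eventually_atTop.1 huv
  refine ⟨max N₁ N₂, fun m hm n hn => ?_⟩
  have hm' := hN₂ m (le_of_max_le_right hm)
  have hn' := hN₂ n (le_of_max_le_right hn)
  have hv' := hN₁ m (le_of_max_le_left hm) n (le_of_max_le_left hn)
  calc dist (u m) (u n) ≤ dist (u m) (v m) + dist (v m) (v n) + dist (v n) (u n) :=
        dist_triangle4 _ _ _ _
    _ < ε := by rw [dist_comm (v n)]; linarith

section EmpiricalMeasures

open Finset

variable {X : Type*} [PseudoMetricSpace X] [MeasurableSpace X]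

theorem smul_sum_dirac_apply_le_thickening {ι : Type*} [Fintype ι] (c : ℝ≥0∞) (y z : ι → X)
    {ε t : ℝ} (hεt : ε ≤ t) {B : Set X} (hB : MeasurableSet B) :
    (c • ∑ i, Measure.dirac (y i)) B
      ≤ (c • ∑ i, Measure.dirac (z i)) (thickening t B) + c * #{i | ε ≤ dist (y i) (z i)} := by
  simp only [Measure.smul_apply, Measure.finsetSum_apply, smul_eq_mul, ← mul_add,
    natCast_card_filter, ← sum_add_distrib]
  gcongr with i
  by_cases hyB : y i ∈ B
  · by_cases hbad : ε ≤ dist (y i) (z i)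
    · simp only [hbad, if_true]
      exact prob_le_one.trans le_add_self
    · have hz : z i ∈ thickening t B :=
        mem_thickening_iff.2 ⟨y i, hyB, by rw [dist_comm]; linarith⟩
      rw [Measure.dirac_apply_of_mem hz]
      exact prob_le_one.trans le_self_add
  · rw [Measure.dirac_apply' _ hB, indicator_of_notMem hyB]
    exact zero_le

theorem levyProkhorovEDist_smul_sum_dirac_le {ι : Type*} [Fintype ι] (c : ℝ≥0∞) (y z : ι → X)
    {ε : ℝ} (h : c * #{i | ε ≤ dist (y i) (z i)} ≤ ENNReal.ofReal ε) :
    levyProkhorovEDist (c • ∑ i, Measure.dirac (y i)) (c • ∑ i, Measure.dirac (z i))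
      ≤ ENNReal.ofReal ε := by
  refine levyProkhorovEDist_le_of_forall _ _ _ fun ε' B hε' hε'top hB => ?_
  rw [← ENNReal.ofReal_toReal hε'top.ne] at hε'
  have hεt : ε ≤ ε'.toReal := (ENNReal.ofReal_lt_ofReal_iff'.1 hε').1.le
  have hbad : c * #{i | ε ≤ dist (y i) (z i)} ≤ ε' :=
    h.trans (hε'.le.trans_eq (ENNReal.ofReal_toReal hε'top.ne))
  have hbad' : c * #{i | ε ≤ dist (z i) (y i)} ≤ ε' := by simpa only [dist_comm] using hbad
  exact ⟨(smul_sum_dirac_apply_le_thickening c y z hεt hB).trans (add_le_add_right hbad _),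
    (smul_sum_dirac_apply_le_thickening c z y hεt hB).trans (add_le_add_right hbad' _)⟩

omit [PseudoMetricSpace X] in
theorem avgDirac_eq_smul_sum_dirac {n : ℕ} (hn : n ≠ 0) (y : ℕ → X) :
    (avgDirac y n : Measure X) = (n : ℝ≥0∞)⁻¹ • ∑ i : Fin n, Measure.dirac (y i) := by
  rw [Fin.sum_univ_eq_sum_range (fun i => Measure.dirac (y i))]
  simp [avgDirac, Nat.one_le_iff_ne_zero.2 hn]

theorem levyProkhorovEDist_avgDirac_le {n : ℕ} (hn : n ≠ 0) (y z : ℕ → X)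
    (σ : Equiv.Perm (Fin n)) {ε : ℝ} (hε : 0 < ε)
    (h : ∑ i : Fin n, dist (y i) (z (σ i)) < ε ^ 2 * n) :
    levyProkhorovEDist (avgDirac y n : Measure X) (avgDirac z n) ≤ ENNReal.ofReal ε := by
  rw [avgDirac_eq_smul_sum_dirac hn, avgDirac_eq_smul_sum_dirac hn,
    ← Equiv.sum_comp σ (fun i => Measure.dirac (z i))]
  refine levyProkhorovEDist_smul_sum_dirac_le _ _ _ ?_
  set bad := #{i : Fin n | ε ≤ dist (y i) (z (σ i))}
  have hmarkov : ε * bad ≤ ∑ i : Fin n, dist (y i) (z (σ i)) :=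
    calc ε * bad = ∑ i ∈ filter (fun i : Fin n => ε ≤ dist (y i) (z (σ i))) univ, ε := by
          rw [sum_const, nsmul_eq_mul, mul_comm]
      _ ≤ ∑ i ∈ filter (fun i : Fin n => ε ≤ dist (y i) (z (σ i))) univ, dist (y i) (z (σ i)) :=
          sum_le_sum fun i hi => (mem_filter.1 hi).2
      _ ≤ ∑ i : Fin n, dist (y i) (z (σ i)) :=
          sum_le_sum_of_subset_of_nonneg (filter_subset _ _) fun _ _ _ => dist_nonneg
  have hbad : (bad : ℝ) ≤ n * ε := by nlinarith
  rw [ENNReal.inv_mul_le_iff (by simpa using hn) (ENNReal.natCast_ne_top n),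
    ← ENNReal.ofReal_natCast, ← ENNReal.ofReal_natCast n, ← ENNReal.ofReal_mul (by positivity)]
  exact ENNReal.ofReal_le_ofReal hbad

end EmpiricalMeasures

section MeanOrbitalDist

variable {X : Type*} [MetricSpace X]

theorem eventually_exists_perm_sum_dist_lt (hd : ∃ C, ∀ a b : X, dist a b ≤ C) (T : X → X)
    {y x : X} {c : ℝ} (hc : meanOrbitalDist T y x < c) :
    ∀ᶠ n in atTop, ∃ σ : Equiv.Perm (Fin n),
      ∑ i : Fin n, dist (T^[i] y) (T^[σ i] x) < c * n := by
  obtain ⟨C, hC⟩ := hd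
  set cost : (n : ℕ) → Equiv.Perm (Fin n) → ℝ :=
    fun n σ => (∑ i : Fin n, dist (T^[i] y) (T^[σ i] x)) / n
  have hcost_nonneg : ∀ n σ, 0 ≤ cost n σ := fun n σ => by positivity
  -- the limsup defining `Ē` is a genuine one because all costs lie in `[0, C]`
  have hbdd : IsBoundedUnder (· ≤ ·) atTop fun n => ⨅ σ, cost n σ := by
    refine ⟨C, eventually_map.2 (Eventually.of_forall fun n => ?_)⟩
    refine (ciInf_le ⟨0, forall_mem_range.2 (hcost_nonneg n)⟩ 1).trans ?_
    refine div_le_of_le_mul₀ n.cast_nonneg ((dist_nonneg).trans (hC x x)) ?_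
    simpa [mul_comm] using Finset.sum_le_card_nsmul (Finset.univ : Finset (Fin n)) _ C
      fun i _ => hC (T^[i] y) (T^[(1 : Equiv.Perm (Fin n)) i] x)
  filter_upwards [eventually_lt_of_limsup_lt hc hbdd, eventually_gt_atTop 0] with n hn hn0
  obtain ⟨σ, hσ⟩ := exists_lt_of_ciInf_lt hn
  exact ⟨σ, (div_lt_iff₀ (Nat.cast_pos.2 hn0)).1 hσ⟩

theorem eventually_dist_avgDirac_orbit_le [MeasurableSpace X] [BorelSpace X]
    (hd : ∃ C, ∀ a b : X, dist a b ≤ C) (T : X → X)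
    {y x : X} {ε : ℝ} (hε : 0 < ε) (h : meanOrbitalDist T y x < ε ^ 2) :
    ∀ᶠ n in atTop, dist (LevyProkhorov.ofMeasure (avgDirac (fun i => T^[i] y) n))
      (LevyProkhorov.ofMeasure (avgDirac (fun i => T^[i] x) n)) ≤ ε := by
  filter_upwards [eventually_exists_perm_sum_dist_lt hd T h, eventually_ne_atTop 0]
    with n ⟨σ, hσ⟩ hn
  rw [← edist_le_ofReal hε.le, LevyProkhorov.edist_probabilityMeasure_def]
  exact levyProkhorovEDist_avgDirac_le hn _ _ σ hε hσ

end MeanOrbitalDist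

theorem stmt3_general {X : Type*} [MetricSpace X] [TopologicalSpace.SeparableSpace X]
    [CompleteSpace X] [MeasurableSpace X] [BorelSpace X]
    (hd : ∃ C, ∀ a b : X, dist a b ≤ C)
    (T : X → X) (xk : ℕ → X) (x : X)
    (hq : ∀ k, ∃ μ : ProbabilityMeasure X, genericFor T (xk k) μ)
    (hconv : Tendsto (fun k => meanOrbitalDist T (xk k) x) atTop (𝓝 0)) :
    ∃ μ : ProbabilityMeasure X, genericFor T x μ := by
  choose μ hμ using hq
  let emp : X → ℕ → LevyProkhorov (ProbabilityMeasure X) :=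
    fun y n => .ofMeasure (avgDirac (fun i => T^[i] y) n)
  have hemp : ∀ k, CauchySeq (emp (xk k)) := fun k =>
    ((LevyProkhorov.continuous_ofMeasure_probabilityMeasure.tendsto _).comp (hμ k)).cauchySeq
  have hcauchy : CauchySeq (emp x) := by
    refine cauchySeq_of_forall_eventually_dist_le fun ε hε => ?_
    obtain ⟨k, hk⟩ := (hconv.eventually (gt_mem_nhds (pow_pos hε 2))).exists
    refine ⟨emp (xk k), hemp k, ?_⟩
    simpa only [dist_comm] using eventually_dist_avgDirac_orbit_le hd T hε hk
  obtain ⟨ν, hν⟩ := cauchySeq_tendsto_of_complete hcauchy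
  exact ⟨ν.toMeasure, (LevyProkhorov.continuous_toMeasure_probabilityMeasure.tendsto ν).comp hν⟩

theorem stmt3 {X : Type*} [MetricSpace X] [TopologicalSpace.SeparableSpace X]
    [CompleteSpace X] [MeasurableSpace X] [BorelSpace X]
    (hd : ∃ C, ∀ a b : X, dist a b ≤ C)
    (T : X → X) (hT : Continuous T) (xk : ℕ → X) (x : X)
    (hq : ∀ k, ∃ μ : ProbabilityMeasure X, genericFor T (xk k) μ)
    (hconv : Tendsto (fun k => meanOrbitalDist T (xk k) x) atTop (𝓝 0)) :
    ∃ μ : ProbabilityMeasure X, genericFor T x μ :=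
  stmt3_general hd T xk x hq hconv
end

section
/- Let (X,T) be a Polish dynamical system, A ⊂ Per(T) a set of periodic points, and B ⊂ Q_T(X) a set of quasi-regular points. Then {μ_x : x ∈ A} is dense in {μ_y : y ∈ B} (in the weak* topology on invariant measures) if and only if for every y ∈ B, ε > 0, and N ∈ ℕ there exist x ∈ A and n ≥ N with T^n x = x and min_{σ∈S_n} (1/n) Σ_{i=0}^{n-1} d(T^i x, T^{σ(i)} y) < ε. -/
open MeasureTheory Filter Topology
open scoped ENNReal NNReal

/-!
The Lévy–Prokhorov metric metrizes the weak* topology on a separable space, so both sides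
compare empirical measures of orbit segments in that metric. If a permutation `σ` matches two
`n`-point segments with average cost below `t²`, Markov's inequality leaves at most `t n` pairs
at distance `≥ t`, so the two empirical measures are `t`-close. Conversely, if they are
`δ`-close, then `μ(S) ≤ ν(S^δ) + δ` for finite `S` is Hall's condition with deficiency `δ n` for
the graph joining points at distance `< δ`; the resulting partial matching, completed to a
permutation, costs at most `δ (1 + C) + C / n` on average, where `C` bounds `d`. Running a
periodic orbit through a whole number of periods reproduces its orbit measure, so `n` can be
taken arbitrarily large.
-/

open Finset Metric

section EmpiricalMeasures

variable {X : Type*} [MeasurableSpace X]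

open scoped Classical

lemma avgDirac_coe (a : ℕ → X) {n : ℕ} (hn : 0 < n) :
    (avgDirac a n : Measure X) = (n : ℝ≥0∞)⁻¹ • ∑ i ∈ range n, Measure.dirac (a i) := by
  simp [avgDirac, Nat.max_eq_left hn]

lemma natCast_mul_avgDirac_apply (a : ℕ → X) {n : ℕ} (hn : 0 < n) {B : Set X}
    (hB : MeasurableSet B) :
    (n : ℝ≥0∞) * (avgDirac a n : Measure X) B = #{i : Fin n | a i ∈ B} := by
  rw [avgDirac_coe a hn, Measure.smul_apply, smul_eq_mul, ← mul_assoc,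
    ENNReal.mul_inv_cancel (by simp [hn.ne']) (by simp), one_mul, Measure.finsetSum_apply,
    Finset.sum_range fun i => Measure.dirac (a i) B]
  simp [Measure.dirac_apply' _ hB, Set.indicator_apply]

lemma avgDirac_apply_le_add_ofReal_iff (a b : ℕ → X) {n : ℕ} (hn : 0 < n) {B B' : Set X}
    (hB : MeasurableSet B) (hB' : MeasurableSet B') {ε : ℝ} (hε : 0 ≤ ε) :
    (avgDirac a n : Measure X) B ≤ (avgDirac b n : Measure X) B' + ENNReal.ofReal ε ↔
      (#{i : Fin n | a i ∈ B} : ℝ) ≤ #{j : Fin n | b j ∈ B'} + ε * n := by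
  rw [← ENNReal.mul_le_mul_iff_right (a := n) (by simp [hn.ne']) (by simp), mul_add,
    natCast_mul_avgDirac_apply a hn hB, natCast_mul_avgDirac_apply b hn hB']
  rw [← ENNReal.ofReal_natCast, ← ENNReal.ofReal_natCast #{j : Fin n | b j ∈ B'},
    ← ENNReal.ofReal_natCast n, ← ENNReal.ofReal_mul (by positivity),
    ← ENNReal.ofReal_add (by positivity) (by positivity),
    ENNReal.ofReal_le_ofReal_iff (by positivity), mul_comm (n : ℝ)]

theorem Function.Periodic.sum_range_mul {M : Type*} [AddCommMonoid M] {f : ℕ → M} {p : ℕ}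
    (hf : Function.Periodic f p) (k : ℕ) :
    ∑ i ∈ range (k * p), f i = k • ∑ i ∈ range p, f i := by
  induction k with
  | zero => simp
  | succ k ih =>
    rw [Nat.succ_mul, Finset.sum_range_add, ih, succ_nsmul]
    congr 1
    refine Finset.sum_congr rfl fun i _ => ?_
    rw [add_comm]
    exact_mod_cast hf.nat_mul k i

lemma avgDirac_mul_of_periodic {a : ℕ → X} {p : ℕ} (ha : Function.Periodic a p) {k : ℕ}
    (hk : 0 < k) : avgDirac a (k * p) = avgDirac a p := by
  rcases p.eq_zero_or_pos with rfl | hp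
  · rfl
  apply ProbabilityMeasure.toMeasure_injective
  rw [avgDirac_coe a (Nat.mul_pos hk hp), avgDirac_coe a hp,
    Function.Periodic.sum_range_mul (f := fun i => Measure.dirac (a i))
      (fun i => congrArg Measure.dirac (ha i)) k, ← Nat.cast_smul_eq_nsmul ℝ≥0∞, smul_smul,
    Nat.cast_mul, ENNReal.mul_inv (by simp) (by simp), mul_right_comm,
    ENNReal.inv_mul_cancel (by simp [hk.ne']) (by simp), one_mul]

end EmpiricalMeasures

section HallDeficiency

variable {ι α : Type*} [DecidableEq α]

theorem Finset.exists_injective_mem_disjSum_of_card_le_card_biUnion_add (t : ι → Finset α)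
    (D : ℕ) (h : ∀ s : Finset ι, #s ≤ #(s.biUnion t) + D) :
    ∃ f : ι → α ⊕ Fin D, Function.Injective f ∧ ∀ i, f i ∈ (t i).disjSum univ := by
  refine (all_card_le_biUnion_card_iff_exists_injective _).1 fun s => ?_
  rcases s.eq_empty_or_nonempty with rfl | ⟨i₀, hi₀⟩
  · simp
  calc #s ≤ #((s.biUnion t).disjSum (univ : Finset (Fin D))) := by simpa using h s
    _ ≤ _ := card_le_card fun z hz => by
      rcases z with a | d
      · simpa using hz
      · simpa using ⟨i₀, hi₀⟩

theorem Equiv.Perm.exists_card_notMem_le_of_card_le_card_biUnion_add [Fintype α]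
    (t : α → Finset α) (D : ℕ) (h : ∀ s : Finset α, #s ≤ #(s.biUnion t) + D) :
    ∃ σ : Equiv.Perm α, #{i | σ i ∉ t i} ≤ D := by
  obtain ⟨f, hf_inj, hf⟩ := exists_injective_mem_disjSum_of_card_le_card_biUnion_add t D h
  set good : Finset α := {i | (f i).isLeft}
  set g : α → α := fun i => Sum.elim id (fun _ => i) (f i)
  have hfg : ∀ i ∈ good, f i = .inl (g i) := fun i hi => by
    rcases hfi : f i with a | d <;> simp_all [good, g]
  have hg_inj : Set.InjOn g good := fun i hi j hj hij => hf_inj (by rw [hfg i hi, hfg j hj, hij])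
  obtain ⟨e, he⟩ := exists_equiv_extend_of_card_eq (t := univ) (by simp) (subset_univ _) hg_inj
  have hbad : #goodᶜ ≤ D :=
    calc #goodᶜ ≤ #((univ : Finset (Fin D)).map .inr) :=
          card_le_card_of_injOn f (fun i hi => by
            rcases hfi : f i with a | d <;> simp_all [good]) hf_inj.injOn
      _ = D := by simp
  refine ⟨e.trans (Equiv.subtypeUnivEquiv mem_univ), (card_le_card fun i hi => ?_).trans hbad⟩
  simp only [mem_filter, mem_univ, true_and, mem_compl] at hi ⊢
  exact fun hgood => hi (by simpa [he i hgood, hfg i hgood] using hf i)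

end HallDeficiency

section Matching

variable {X : Type*} [PseudoMetricSpace X]

open scoped Classical

def matchingCost (a b : ℕ → X) {n : ℕ} (σ : Equiv.Perm (Fin n)) : ℝ :=
  ∑ i : Fin n, dist (a i) (b (σ i))

lemma card_le_dist_mul_le_matchingCost (a b : ℕ → X) {n : ℕ} (σ : Equiv.Perm (Fin n)) (t : ℝ) :
    #{i : Fin n | t ≤ dist (a i) (b (σ i))} * t ≤ matchingCost a b σ :=
  calc #{i : Fin n | t ≤ dist (a i) (b (σ i))} * t
      ≤ ∑ i ∈ {i : Fin n | t ≤ dist (a i) (b (σ i))}, dist (a i) (b (σ i)) := by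
        simpa using card_nsmul_le_sum _ _ t fun i hi => (mem_filter.1 hi).2
    _ ≤ matchingCost a b σ :=
        sum_le_sum_of_subset_of_nonneg (subset_univ _) fun _ _ _ => dist_nonneg

end Matching

section LevyProkhorov

variable {X : Type*} [MetricSpace X] [MeasurableSpace X] [OpensMeasurableSpace X]

open scoped Classical

lemma levyProkhorovDist_avgDirac_le_of_matchingCost_lt {a b : ℕ → X} {n : ℕ} (hn : 0 < n)
    (σ : Equiv.Perm (Fin n)) {t : ℝ} (ht : 0 < t) (h : matchingCost a b σ / n < t ^ 2) :
    levyProkhorovDist (avgDirac a n : Measure X) (avgDirac b n) ≤ t := by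
  have hn' : (0 : ℝ) < n := by exact_mod_cast hn
  set bad : Finset (Fin n) := {i : Fin n | t ≤ dist (a i) (b (σ i))}
  have hbad : (#bad : ℝ) ≤ t * n := by
    have := card_le_dist_mul_le_matchingCost a b σ t
    rw [div_lt_iff₀ hn'] at h
    nlinarith
  refine levyProkhorovDist_le_of_forall_le _ _ ht.le fun ε B hε hB => ?_
  rw [avgDirac_apply_le_add_ofReal_iff a b hn hB isOpen_thickening.measurableSet (by linarith)]
  have hcover : ({i : Fin n | a i ∈ B} : Finset (Fin n)) ⊆
      ({i : Fin n | b (σ i) ∈ thickening ε B} : Finset (Fin n)) ∪ bad := fun i hi => by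
    by_cases hi' : t ≤ dist (a i) (b (σ i))
    · simp [bad, hi']
    · simp only [mem_filter, mem_univ, true_and] at hi
      exact mem_union_left _ (by simpa using mem_thickening_iff.2 ⟨a i, hi, by
        rw [dist_comm]; linarith⟩)
  have hσ : #({i : Fin n | b (σ i) ∈ thickening ε B} : Finset (Fin n)) =
      #({j : Fin n | b j ∈ thickening ε B} : Finset (Fin n)) :=
    card_equiv σ (by simp)
  calc (#{i : Fin n | a i ∈ B} : ℝ) ≤ #{j : Fin n | b j ∈ thickening ε B} + #bad := by
        rw [← hσ]; exact_mod_cast (card_le_card hcover).trans (card_union_le _ _)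
    _ ≤ _ := by nlinarith

lemma card_le_card_biUnion_add_of_levyProkhorovDist_lt {a b : ℕ → X} {n : ℕ} (hn : 0 < n)
    {δ : ℝ} (hδ : 0 < δ) (h : levyProkhorovDist (avgDirac a n : Measure X) (avgDirac b n) < δ)
    (s : Finset (Fin n)) :
    (#s : ℝ) ≤ #(s.biUnion fun i => {j : Fin n | dist (a i) (b j) < δ}) + δ * n := by
  set B : Set X := (fun i : Fin n => a i) '' s
  have hB : MeasurableSet B := (s.finite_toSet.image _).isClosed.measurableSet
  have hE : levyProkhorovEDist (avgDirac a n : Measure X) (avgDirac b n) < ENNReal.ofReal δ := by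
    rwa [ENNReal.lt_ofReal_iff_toReal_lt (levyProkhorovEDist_ne_top _ _)]
  have hBδ := left_measure_le_of_levyProkhorovEDist_lt hE hB
  rw [ENNReal.toReal_ofReal hδ.le, avgDirac_apply_le_add_ofReal_iff a b hn hB
    isOpen_thickening.measurableSet hδ.le] at hBδ
  refine le_trans ?_ (hBδ.trans_eq ?_)
  · exact_mod_cast card_le_card fun i hi => by simpa [B] using ⟨i, hi, rfl⟩
  · congr 3
    ext j
    simp [B, mem_thickening_iff, dist_comm]

lemma exists_matchingCost_div_le_of_levyProkhorovDist_lt {a b : ℕ → X} {n : ℕ} (hn : 0 < n)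
    {δ C : ℝ} (hδ : 0 < δ) (hC : ∀ p q : X, dist p q ≤ C)
    (h : levyProkhorovDist (avgDirac a n : Measure X) (avgDirac b n) < δ) :
    ∃ σ : Equiv.Perm (Fin n), matchingCost a b σ / n ≤ δ * (1 + C) + C / n := by
  have hn' : (0 : ℝ) < n := by exact_mod_cast hn
  set t : Fin n → Finset (Fin n) := fun i => {j : Fin n | dist (a i) (b j) < δ}
  obtain ⟨σ, hσ⟩ := Equiv.Perm.exists_card_notMem_le_of_card_le_card_biUnion_add t ⌈δ * n⌉₊
    fun s => by
      have := card_le_card_biUnion_add_of_levyProkhorovDist_lt hn hδ h s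
      have := Nat.le_ceil (δ * n)
      exact_mod_cast (by linarith : (#s : ℝ) ≤ #(s.biUnion t) + ⌈δ * n⌉₊)
  have hbad : (#{i : Fin n | σ i ∉ t i} : ℝ) ≤ δ * n + 1 :=
    (Nat.cast_le.2 hσ).trans (Nat.ceil_lt_add_one (by positivity)).le
  have hC0 : 0 ≤ C := by simpa using hC (a 0) (a 0)
  have hpair : ∀ i : Fin n, dist (a i) (b (σ i)) ≤ δ + if σ i ∈ t i then 0 else C := fun i => by
    split_ifs with hi
    · simpa [t] using (mem_filter.1 hi).2.le
    · linarith [hC (a i) (b (σ i))]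
  refine ⟨σ, (div_le_iff₀ hn').2 ?_⟩
  calc matchingCost a b σ ≤ ∑ i : Fin n, (δ + if σ i ∈ t i then 0 else C) :=
        sum_le_sum fun i _ => hpair i
    _ = n * δ + #{i : Fin n | σ i ∉ t i} * C := by
      simp [sum_add_distrib, sum_ite, filter_not]
    _ ≤ n * δ + (δ * n + 1) * C := by gcongr
    _ = (δ * (1 + C) + C / n) * n := by field_simp; ring

end LevyProkhorov

section Topology

variable {X : Type*} [PseudoMetricSpace X] [TopologicalSpace.SeparableSpace X] [MeasurableSpace X]
  [OpensMeasurableSpace X]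

lemma MeasureTheory.ProbabilityMeasure.mem_closure_iff_levyProkhorovDist_lt
    {S : Set (ProbabilityMeasure X)} {ν : ProbabilityMeasure X} :
    ν ∈ closure S ↔ ∀ δ > 0, ∃ μ ∈ S, levyProkhorovDist (ν : Measure X) μ < δ := by
  rw [LevyProkhorov.probabilityMeasureHomeomorph.isInducing.closure_eq_preimage_closure_image,
    Set.mem_preimage, Metric.mem_closure_iff]
  simp only [Set.exists_mem_image]
  rfl

lemma MeasureTheory.ProbabilityMeasure.tendsto_iff_levyProkhorovDist_lt
    {ι : Type*} {l : Filter ι} {μs : ι → ProbabilityMeasure X} {ν : ProbabilityMeasure X} :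
    Tendsto μs l (𝓝 ν) ↔ ∀ δ > 0, ∀ᶠ i in l, levyProkhorovDist (μs i : Measure X) ν < δ := by
  rw [LevyProkhorov.probabilityMeasureHomeomorph.isInducing.tendsto_nhds_iff,
    Metric.tendsto_nhds]
  rfl

end Topology

section PeriodicApproximation

variable {X : Type*} [MetricSpace X] [TopologicalSpace.SeparableSpace X] [MeasurableSpace X]
  [BorelSpace X] {T : X → X} {A : Set X} {y : X} {ν : ProbabilityMeasure X}

lemma exists_iInf_matchingCost_lt_of_mem_closure_perMeasures {C : ℝ}
    (hC : ∀ a b : X, dist a b ≤ C) (hν : genericFor T y ν) (hνA : ν ∈ closure (perMeasures T A))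
    {ε : ℝ} (hε : 0 < ε) (N : ℕ) :
    ∃ x ∈ A, ∃ n : ℕ, N ≤ n ∧ 0 < n ∧ T^[n] x = x ∧
      ⨅ σ : Equiv.Perm (Fin n), matchingCost (fun i => T^[i] x) (fun i => T^[i] y) σ / n < ε := by
  have hC0 : 0 ≤ C := by simpa using hC y y
  set δ := ε / (2 * (1 + C)) with hδ_def
  have hδ : 0 < δ := by positivity
  obtain ⟨_, ⟨x, hxA, p, hp, hxp, rfl⟩, hνx⟩ :=
    ProbabilityMeasure.mem_closure_iff_levyProkhorovDist_lt.1 hνA (δ / 2) (by positivity)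
  have hlarge : ∀ᶠ n in atTop, N ≤ n ∧
      levyProkhorovDist (avgDirac (fun i => T^[i] y) n : Measure X) ν < δ / 2 ∧ C / n < ε / 2 :=
    (eventually_ge_atTop N).and <|
      (ProbabilityMeasure.tendsto_iff_levyProkhorovDist_lt.1 hν _ (by positivity)).and <|
        (tendsto_const_div_atTop_nhds_zero_nat C).eventually (gt_mem_nhds (by positivity))
  obtain ⟨k, ⟨hNk, hyk, hCk⟩, hk⟩ :=
    (((tendsto_id.atTop_mul_const' hp : Tendsto (· * p) atTop atTop).eventually hlarge).and
      (eventually_gt_atTop 0)).exists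
  have hkp : 0 < k * p := Nat.mul_pos hk hp
  have hxk : avgDirac (fun i => T^[i] x) (k * p) = periodicOrbitMeasure T x p :=
    avgDirac_mul_of_periodic (fun i => by rw [Function.iterate_add_apply, hxp]) hk
  have hxy : levyProkhorovDist (avgDirac (fun i => T^[i] x) (k * p) : Measure X)
      (avgDirac (fun i => T^[i] y) (k * p)) < δ := by
    rw [hxk]
    linarith [levyProkhorovDist_triangle (periodicOrbitMeasure T x p : Measure X) ν
      (avgDirac (fun i => T^[i] y) (k * p)),
      levyProkhorovDist_comm (periodicOrbitMeasure T x p : Measure X) ν,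
      levyProkhorovDist_comm (ν : Measure X) (avgDirac (fun i => T^[i] y) (k * p))]
  obtain ⟨σ, hσ⟩ := exists_matchingCost_div_le_of_levyProkhorovDist_lt hkp hδ hC hxy
  refine ⟨x, hxA, k * p, hNk, hkp, Function.IsPeriodicPt.const_mul hxp k, ?_⟩
  calc _ ≤ matchingCost (fun i => T^[i] x) (fun i => T^[i] y) σ / (k * p : ℕ) :=
        ciInf_le (Set.finite_range _).bddBelow σ
    _ ≤ δ * (1 + C) + C / (k * p : ℕ) := hσ
    _ < ε := by
      have : δ * (1 + C) = ε / 2 := by rw [hδ_def]; field_simp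
      linarith

lemma mem_closure_perMeasures_of_forall_iInf_matchingCost_lt (hν : genericFor T y ν)
    (h : ∀ ε > (0 : ℝ), ∀ N : ℕ, ∃ x ∈ A, ∃ n : ℕ, N ≤ n ∧ 0 < n ∧ T^[n] x = x ∧
      ⨅ σ : Equiv.Perm (Fin n), matchingCost (fun i => T^[i] x) (fun i => T^[i] y) σ / n < ε) :
    ν ∈ closure (perMeasures T A) := by
  refine ProbabilityMeasure.mem_closure_iff_levyProkhorovDist_lt.2 fun δ hδ => ?_
  obtain ⟨M, hM⟩ := eventually_atTop.1
    (ProbabilityMeasure.tendsto_iff_levyProkhorovDist_lt.1 hν (δ / 2) (half_pos hδ))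
  obtain ⟨x, hxA, n, hMn, hn, hxn, hcost⟩ := h ((δ / 2) ^ 2) (by positivity) M
  obtain ⟨σ, hσ⟩ := exists_lt_of_ciInf_lt hcost
  have hxy := levyProkhorovDist_avgDirac_le_of_matchingCost_lt hn σ (half_pos hδ) hσ
  refine ⟨avgDirac (fun i => T^[i] x) n, ⟨x, hxA, n, hn, hxn, rfl⟩, ?_⟩
  linarith [hM n hMn, levyProkhorovDist_triangle (ν : Measure X)
    (avgDirac (fun i => T^[i] y) n) (avgDirac (fun i => T^[i] x) n),
    levyProkhorovDist_comm (ν : Measure X) (avgDirac (fun i => T^[i] y) n),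
    levyProkhorovDist_comm (avgDirac (fun i => T^[i] x) n : Measure X)
      (avgDirac (fun i => T^[i] y) n)]

end PeriodicApproximation

theorem stmt4_general {X : Type*} [MetricSpace X] [TopologicalSpace.SeparableSpace X]
    [MeasurableSpace X] [BorelSpace X]
    (hd : ∃ C, ∀ a b : X, dist a b ≤ C)
    (T : X → X) (A B : Set X)
    (hB : ∀ y ∈ B, ∃ μ : ProbabilityMeasure X, genericFor T y μ) :
    ({ν : ProbabilityMeasure X | ∃ y ∈ B, genericFor T y ν} ⊆ closure (perMeasures T A)) ↔
      (∀ y ∈ B, ∀ ε > (0 : ℝ), ∀ N : ℕ, ∃ x ∈ A, ∃ n : ℕ, N ≤ n ∧ 0 < n ∧ T^[n] x = x ∧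
        (⨅ σ : Equiv.Perm (Fin n),
          (∑ i : Fin n, dist (T^[(i : ℕ)] x) (T^[((σ i : Fin n) : ℕ)] y)) / n) < ε) := by
  obtain ⟨C, hC⟩ := hd
  constructor
  · intro hdense y hy ε hε N
    obtain ⟨ν, hν⟩ := hB y hy
    exact exists_iInf_matchingCost_lt_of_mem_closure_perMeasures hC hν (hdense ⟨y, hy, hν⟩) hε N
  · rintro h ν ⟨y, hy, hν⟩
    exact mem_closure_perMeasures_of_forall_iInf_matchingCost_lt hν (h y hy)

theorem stmt4 {X : Type*} [MetricSpace X] [TopologicalSpace.SeparableSpace X]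
    [CompleteSpace X] [MeasurableSpace X] [BorelSpace X]
    (hd : ∃ C, ∀ a b : X, dist a b ≤ C)
    (T : X → X) (hT : Continuous T) (A B : Set X)
    (hA : ∀ x ∈ A, ∃ p, 0 < p ∧ T^[p] x = x)
    (hB : ∀ y ∈ B, ∃ μ : ProbabilityMeasure X, genericFor T y μ) :
    ({ν : ProbabilityMeasure X | ∃ y ∈ B, genericFor T y ν} ⊆ closure (perMeasures T A)) ↔
      (∀ y ∈ B, ∀ ε > (0 : ℝ), ∀ N : ℕ, ∃ x ∈ A, ∃ n : ℕ, N ≤ n ∧ 0 < n ∧ T^[n] x = x ∧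
        (⨅ σ : Equiv.Perm (Fin n),
          (∑ i : Fin n, dist (T^[(i : ℕ)] x) (T^[((σ i : Fin n) : ℕ)] y)) / n) < ε) :=
  stmt4_general hd T A B hB
end

section
/- Let (X,T) be a Polish dynamical system and K ⊂ Per(T). If (X,T) is K-closable (every ergodic invariant measure has a generic point which is K-closable), then the set {μ_x : x ∈ K} of invariant measures supported on periodic orbits of points of K is dense in the set of ergodic T-invariant measures (in the weak* topology). -/
open MeasureTheory Filter Topology
open scoped ENNReal NNReal

/-!
Let `x` be a `K`-closable generic point of `μ`. For large `p` the empirical measure of the first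
`p` points of the orbit of `x` is close to `μ`, and closability supplies `y ∈ K` of period
`q ∈ [p, (1 + ε) p]` whose first `p` iterates `ε`-shadow those of `x`. The periodic orbit measure
of `y` then differs from that empirical measure by at most `ε` in the Lévy–Prokhorov metric: the
shadowing moves mass by less than `ε`, and the `q - p` extra points carry mass at most `ε`.
Since this metric metrizes the weak* topology on a separable space, `μ` is a limit of such
periodic orbit measures.
-/

open Metric

lemma sum_indicator_le_sum_indicator_thickening_add {X : Type*} [PseudoMetricSpace X]
    (a b : ℕ → X) {p q : ℕ} (hpq : p ≤ q) {δ : ℝ} (hab : ∀ i < p, dist (a i) (b i) < δ)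
    (B : Set X) :
    ∑ i ∈ Finset.range q, B.indicator (1 : X → ℝ≥0∞) (a i)
      ≤ ∑ i ∈ Finset.range p, (thickening δ B).indicator (1 : X → ℝ≥0∞) (b i)
        + ((q - p : ℕ) : ℝ≥0∞) := by
  rw [← Finset.sum_range_add_sum_Ico _ hpq]
  gcongr with i hi i
  · rw [Finset.mem_range] at hi
    by_cases ha : a i ∈ B
    · have hb : b i ∈ thickening δ B :=
        mem_thickening_iff.mpr ⟨a i, ha, by rw [dist_comm]; exact hab i hi⟩
      simp [ha, hb]
    · simp [ha]
  · calc ∑ i ∈ Finset.Ico p q, B.indicator (1 : X → ℝ≥0∞) (a i)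
        ≤ ∑ _i ∈ Finset.Ico p q, (1 : ℝ≥0∞) :=
          Finset.sum_le_sum fun i _ => Set.indicator_le_self' (fun _ _ => zero_le_one) _
      _ = ((q - p : ℕ) : ℝ≥0∞) := by simp

lemma ENNReal.inv_mul_natCast_sub_le {p q : ℕ} {ε : ℝ} (hε : 0 ≤ ε) (hpq : p ≤ q)
    (hq : (q : ℝ) ≤ (1 + ε) * p) :
    (q : ℝ≥0∞)⁻¹ * ((q - p : ℕ) : ℝ≥0∞) ≤ ENNReal.ofReal ε := by
  rw [mul_comm, ← div_eq_mul_inv]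
  refine ENNReal.div_le_of_le_mul ?_
  have hreal : ((q - p : ℕ) : ℝ) ≤ ε * q := by
    have : (p : ℝ) ≤ q := Nat.cast_le.mpr hpq
    rw [Nat.cast_sub hpq]
    nlinarith
  rw [← ENNReal.ofReal_natCast, ← ENNReal.ofReal_natCast q, ← ENNReal.ofReal_mul hε]
  exact ENNReal.ofReal_le_ofReal hreal

lemma avgDirac_apply {X : Type*} [MeasurableSpace X] (a : ℕ → X) {n : ℕ} (hn : 0 < n)
    {B : Set X} (hB : MeasurableSet B) :
    (avgDirac a n).toMeasure B
      = (n : ℝ≥0∞)⁻¹ * ∑ i ∈ Finset.range n, B.indicator (1 : X → ℝ≥0∞) (a i) := by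
  simp [avgDirac, Nat.max_eq_left hn, Measure.finsetSum_apply, Measure.dirac_apply' _ hB]

lemma levyProkhorovDist_avgDirac_le {X : Type*} [PseudoMetricSpace X] [MeasurableSpace X]
    [OpensMeasurableSpace X] (a b : ℕ → X) {p q : ℕ} {ε : ℝ} (hε : 0 ≤ ε) (hp : 0 < p)
    (hpq : p ≤ q) (hq : (q : ℝ) ≤ (1 + ε) * p) (hab : ∀ i < p, dist (a i) (b i) < ε) :
    levyProkhorovDist (avgDirac a q).toMeasure (avgDirac b p).toMeasure ≤ ε := by
  refine levyProkhorovDist_le_of_forall_le _ _ hε fun ε' B hε' hB => ?_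
  rw [avgDirac_apply a (hp.trans_le hpq) hB,
    avgDirac_apply b hp isOpen_thickening.measurableSet]
  set S := ∑ i ∈ Finset.range p, (thickening ε' B).indicator (1 : X → ℝ≥0∞) (b i)
  calc (q : ℝ≥0∞)⁻¹ * ∑ i ∈ Finset.range q, B.indicator (1 : X → ℝ≥0∞) (a i)
      ≤ (q : ℝ≥0∞)⁻¹ * (S + ((q - p : ℕ) : ℝ≥0∞)) := by
        gcongr
        exact sum_indicator_le_sum_indicator_thickening_add a b hpq
          (fun i hi => (hab i hi).trans hε') B
    _ = (q : ℝ≥0∞)⁻¹ * S + (q : ℝ≥0∞)⁻¹ * ((q - p : ℕ) : ℝ≥0∞) := mul_add _ _ _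
    _ ≤ (p : ℝ≥0∞)⁻¹ * S + ENNReal.ofReal ε' := by
        gcongr
        exact (ENNReal.inv_mul_natCast_sub_le hε hpq hq).trans
          (ENNReal.ofReal_le_ofReal hε'.le)

namespace MeasureTheory.ProbabilityMeasure

variable {X : Type*} [PseudoMetricSpace X] [TopologicalSpace.SeparableSpace X]
  [MeasurableSpace X] [OpensMeasurableSpace X]

lemma tendsto_nhds_iff_levyProkhorovDist {ι : Type*} {l : Filter ι}
    {f : ι → ProbabilityMeasure X} {μ : ProbabilityMeasure X} :
    Tendsto f l (𝓝 μ)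
      ↔ Tendsto (fun i => levyProkhorovDist (f i).toMeasure μ.toMeasure) l (𝓝 0) := by
  rw [LevyProkhorov.probabilityMeasureHomeomorph.isInducing.tendsto_nhds_iff,
    tendsto_iff_dist_tendsto_zero]
  rfl

lemma mem_closure_iff_levyProkhorovDist {S : Set (ProbabilityMeasure X)}
    {μ : ProbabilityMeasure X} :
    μ ∈ closure S ↔ ∀ δ > 0, ∃ ν ∈ S, levyProkhorovDist μ.toMeasure ν.toMeasure < δ := by
  rw [LevyProkhorov.probabilityMeasureHomeomorph.isEmbedding.closure_eq_preimage_closure_image,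
    Set.mem_preimage, Metric.mem_closure_iff]
  simp only [Set.exists_mem_image]
  rfl

end MeasureTheory.ProbabilityMeasure

theorem mem_closure_perMeasures_of_genericFor_of_closableAt {X : Type*} [MetricSpace X]
    [TopologicalSpace.SeparableSpace X] [MeasurableSpace X] [BorelSpace X]
    {T : X → X} {K : Set X} {x : X} {μ : ProbabilityMeasure X}
    (hgen : genericFor T x μ) (hx : ClosableAt T K x) :
    μ ∈ closure (perMeasures T K) := by
  rw [ProbabilityMeasure.mem_closure_iff_levyProkhorovDist]
  intro δ hδ
  obtain ⟨N, hN⟩ := eventually_atTop.mp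
    ((ProbabilityMeasure.tendsto_nhds_iff_levyProkhorovDist.mp hgen).eventually
      (gt_mem_nhds (half_pos hδ)))
  obtain ⟨p, q, hp, hNp, hpq, hq, y, hyK, hyq, hyx⟩ := hx (δ / 2) (half_pos hδ) N
  set ν := avgDirac (fun i => T^[i] x) p
  refine ⟨periodicOrbitMeasure T y q, ⟨y, hyK, q, hp.trans_le hpq, hyq, rfl⟩, ?_⟩
  calc levyProkhorovDist μ.toMeasure (periodicOrbitMeasure T y q).toMeasure
      ≤ levyProkhorovDist μ.toMeasure ν.toMeasure
        + levyProkhorovDist ν.toMeasure (periodicOrbitMeasure T y q).toMeasure :=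
        levyProkhorovDist_triangle _ _ _
    _ < δ / 2 + δ / 2 := by
        refine add_lt_add_of_lt_of_le ?_ ?_ <;> rw [levyProkhorovDist_comm]
        · exact hN p hNp
        · exact levyProkhorovDist_avgDirac_le _ _ (half_pos hδ).le hp hpq hq hyx
    _ = δ := add_halves δ

theorem stmt6_general {X : Type*} [MetricSpace X] [TopologicalSpace.SeparableSpace X]
    [MeasurableSpace X] [BorelSpace X]
    (T : X → X) (K : Set X)
    (hcl : ∀ μ : ProbabilityMeasure X, Ergodic T μ.toMeasure →
      ∃ x : X, genericFor T x μ ∧ ClosableAt T K x) :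
    {μ : ProbabilityMeasure X | Ergodic T μ.toMeasure} ⊆ closure (perMeasures T K) := by
  intro μ hμ
  obtain ⟨x, hgen, hx⟩ := hcl μ hμ
  exact mem_closure_perMeasures_of_genericFor_of_closableAt hgen hx

theorem stmt6 {X : Type*} [MetricSpace X] [TopologicalSpace.SeparableSpace X]
    [CompleteSpace X] [MeasurableSpace X] [BorelSpace X]
    (hd : ∃ C, ∀ a b : X, dist a b ≤ C)
    (T : X → X) (hT : Continuous T) (K : Set X)
    (hK : ∀ y ∈ K, ∃ p, 0 < p ∧ T^[p] y = y)
    (hcl : ∀ μ : ProbabilityMeasure X, Ergodic T μ.toMeasure →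
      ∃ x : X, genericFor T x μ ∧ ClosableAt T K x) :
    {μ : ProbabilityMeasure X | Ergodic T μ.toMeasure} ⊆ closure (perMeasures T K) :=
  stmt6_general T K hcl
end

section
/- Let (X,T) be a Polish dynamical system and K ⊂ Per(T). If K is linkable, then the set {μ_x : x ∈ K} is dense in its closed convex hull inside the space of T-invariant measures with the weak* topology. -/
open MeasureTheory Filter Topology
open scoped ENNReal NNReal

/-!
Since `(u, v) ↦ a • u + b • v` is continuous, the closure of the set `P` of periodic-orbit
measures is convex as soon as each combination `a • μ₁ + b • μ₂` of two elements of `P` lies in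
that closure; then the closed convex hull of `P` is contained in the closure of `P`.

For such a combination, linkability with `ε = 1 / (n + 1)` yields periodic points `zₙ ∈ K` whose
orbit shadows the orbit of `y₁` for `p₁` steps and then that of `y₂` for `p₂` steps, with
`p₁ / (p₁ + p₂) → a` and only a vanishing fraction of the period spent elsewhere. Since the
orbits of `y₁, y₂` are finite, `g` is uniformly continuous near them, so the Birkhoff averages of
every bounded continuous `g` along `zₙ` tend to `a ∫ g dμ₁ + b ∫ g dμ₂`.
-/

open Function BoundedContinuousFunction

section Birkhoff

variable {α M : Type*} [AddCommMonoid M] {f : α → α} {x : α}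

theorem Function.IsPeriodicPt.birkhoffSum_mul {n : ℕ} (h : IsPeriodicPt f n x) (g : α → M)
    (k : ℕ) : birkhoffSum f g (k * n) x = k • birkhoffSum f g n x := by
  induction k with
  | zero => simp
  | succ k ih =>
    rw [Nat.succ_mul, birkhoffSum_add, ih, (h.const_mul k).eq, succ_nsmul]

theorem Function.IsPeriodicPt.birkhoffAverage_eq (R : Type*) [Semifield R] [CharZero R]
    [Module R M] {m n : ℕ} (hm : IsPeriodicPt f m x) (hn : IsPeriodicPt f n x) (hm0 : m ≠ 0)
    (hn0 : n ≠ 0) (g : α → M) : birkhoffAverage R f g m x = birkhoffAverage R f g n x := by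
  have key : (n : R) • birkhoffSum f g m x = (m : R) • birkhoffSum f g n x := by
    rw [Nat.cast_smul_eq_nsmul, Nat.cast_smul_eq_nsmul, ← hm.birkhoffSum_mul, ← hn.birkhoffSum_mul,
      mul_comm]
  have hm' : (m : R) ≠ 0 := Nat.cast_ne_zero.mpr hm0
  have hn' : (n : R) ≠ 0 := Nat.cast_ne_zero.mpr hn0
  calc birkhoffAverage R f g m x
      = ((m : R)⁻¹ * (n : R)⁻¹) • (n : R) • birkhoffSum f g m x := by
        rw [smul_smul, mul_assoc, inv_mul_cancel₀ hn', mul_one]; rfl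
    _ = ((n : R)⁻¹ * (m : R)⁻¹) • (m : R) • birkhoffSum f g n x := by rw [key, mul_comm]
    _ = birkhoffAverage R f g n x := by
        rw [smul_smul, mul_assoc, inv_mul_cancel₀ hm', mul_one]; rfl

theorem natCast_smul_birkhoffAverage (R : Type*) [DivisionSemiring R] [CharZero R] [Module R M]
    (f : α → α) (g : α → M) (n : ℕ) (x : α) :
    (n : R) • birkhoffAverage R f g n x = birkhoffSum f g n x := by
  rcases eq_or_ne n 0 with rfl | hn
  · simp
  · exact smul_inv_smul₀ (Nat.cast_ne_zero.mpr hn) _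

theorem Function.IsPeriodicPt.finite_range_iterate {n : ℕ} (h : IsPeriodicPt f n x)
    (hn : 0 < n) : (Set.range fun i => f^[i] x).Finite :=
  (Set.finite_range fun i : Fin n => f^[i] x).subset <| by
    rintro _ ⟨i, rfl⟩
    exact ⟨⟨i % n, Nat.mod_lt _ hn⟩, h.iterate_mod_apply i⟩

variable {E : Type*} [SeminormedAddCommGroup E]

theorem norm_birkhoffSum_le {g : α → E} {C : ℝ} (hg : ∀ x, ‖g x‖ ≤ C) (n : ℕ) (x : α) :
    ‖birkhoffSum f g n x‖ ≤ n * C := by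
  simpa [birkhoffSum] using norm_sum_le_of_le (Finset.range n) fun k _ => hg (f^[k] x)

theorem norm_birkhoffSum_sub_add_le {g : α → E} {C : ℝ} (hg : ∀ x, ‖g x‖ ≤ C)
    {p₁ q₁ p₂ q₂ : ℕ} (h₁ : p₁ ≤ q₁) (h₂ : q₁ + p₂ ≤ q₂) (x : α) :
    ‖birkhoffSum f g q₂ x - (birkhoffSum f g p₁ x + birkhoffSum f g p₂ (f^[q₁] x))‖
      ≤ (q₂ - (p₁ + p₂) : ℕ) * C := by
  obtain ⟨r₁, rfl⟩ := Nat.exists_eq_add_of_le h₁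
  obtain ⟨r₂, rfl⟩ := Nat.exists_eq_add_of_le h₂
  have hsplit : birkhoffSum f g (p₁ + r₁ + p₂ + r₂) x
      - (birkhoffSum f g p₁ x + birkhoffSum f g p₂ (f^[p₁ + r₁] x))
      = birkhoffSum f g r₁ (f^[p₁] x) + birkhoffSum f g r₂ (f^[p₁ + r₁ + p₂] x) := by
    simp only [birkhoffSum_add]
    abel
  have hlen : p₁ + r₁ + p₂ + r₂ - (p₁ + p₂) = r₁ + r₂ := by omega
  rw [hsplit, hlen, Nat.cast_add, add_mul]
  exact (norm_add_le _ _).trans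
    (add_le_add (norm_birkhoffSum_le hg _ _) (norm_birkhoffSum_le hg _ _))

theorem dist_birkhoffAverage_smul_add_smul_le [NormedSpace ℝ E] {g : α → E} {C : ℝ}
    (hg : ∀ x, ‖g x‖ ≤ C) {p₁ q₁ p₂ q₂ : ℕ} (h₁ : p₁ ≤ q₁) (h₂ : q₁ + p₂ ≤ q₂) (x : α) :
    dist (birkhoffAverage ℝ f g q₂ x)
        (((p₁ : ℝ) / q₂) • birkhoffAverage ℝ f g p₁ x
          + ((p₂ : ℝ) / q₂) • birkhoffAverage ℝ f g p₂ (f^[q₁] x))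
      ≤ ((q₂ - (p₁ + p₂) : ℕ) : ℝ) / q₂ * C := by
  have hblock : ∀ (p : ℕ) (w : α),
      ((p : ℝ) / q₂) • birkhoffAverage ℝ f g p w = (q₂ : ℝ)⁻¹ • birkhoffSum f g p w := by
    intro p w
    rw [div_eq_inv_mul, mul_smul, natCast_smul_birkhoffAverage]
  rw [dist_eq_norm, hblock, hblock, birkhoffAverage, ← smul_add, ← smul_sub, norm_smul, norm_inv,
    Real.norm_natCast]
  calc (q₂ : ℝ)⁻¹ * ‖birkhoffSum f g q₂ x - (birkhoffSum f g p₁ x + birkhoffSum f g p₂ (f^[q₁] x))‖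
      ≤ (q₂ : ℝ)⁻¹ * (((q₂ - (p₁ + p₂) : ℕ) : ℝ) * C) := by
        gcongr; exact norm_birkhoffSum_sub_add_le hg h₁ h₂ x
    _ = ((q₂ - (p₁ + p₂) : ℕ) : ℝ) / q₂ * C := by ring

end Birkhoff

theorem tendsto_dist_birkhoffAverage_of_shadowing {X E ι : Type*} [PseudoMetricSpace X]
    [NormedAddCommGroup E] [NormedSpace ℝ E] {T : X → X} {g : X → E} (hg : Continuous g) {y : X}
    (hy : IsCompact (Set.range fun i => T^[i] y)) {l : Filter ι} {z : ι → X} {p : ι → ℕ}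
    {ε : ι → ℝ} (hε : Tendsto ε l (𝓝 0))
    (hshadow : ∀ n, ∀ i < p n, dist (T^[i] (z n)) (T^[i] y) < ε n) :
    Tendsto (fun n => dist (birkhoffAverage ℝ T g (p n) (z n)) (birkhoffAverage ℝ T g (p n) y))
      l (𝓝 0) := by
  rw [Metric.tendsto_nhds]
  intro η hη
  obtain ⟨δ, hδ, hclose⟩ := Metric.mem_uniformity_dist.mp <|
    hy.uniformContinuousAt_of_continuousAt g (fun a _ => hg.continuousAt)
      (Metric.dist_mem_uniformity (half_pos hη))
  filter_upwards [hε.eventually (gt_mem_nhds hδ)] with n hn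
  have hterm : ∀ k ∈ Finset.range (p n), dist (g (T^[k] (z n))) (g (T^[k] y)) ≤ η / 2 := by
    intro k hk
    have hk' := (hshadow n k (Finset.mem_range.mp hk)).trans hn
    rw [dist_comm] at hk' ⊢
    exact (hclose hk' ⟨k, rfl⟩).le
  rw [Real.dist_0_eq_abs, abs_of_nonneg dist_nonneg]
  calc dist (birkhoffAverage ℝ T g (p n) (z n)) (birkhoffAverage ℝ T g (p n) y)
      ≤ (∑ k ∈ Finset.range (p n), dist (g (T^[k] (z n))) (g (T^[k] y))) / p n :=
        dist_birkhoffAverage_birkhoffAverage_le ℝ T g (p n) (z n) y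
    _ ≤ η / 2 := by
        refine div_le_of_le_mul₀ (Nat.cast_nonneg _) (half_pos hη).le ?_
        simpa [mul_comm] using Finset.sum_le_card_nsmul _ _ _ hterm
    _ < η := half_lt_self hη

theorem Function.IsPeriodicPt.tendsto_birkhoffAverage_of_shadowing {X E ι : Type*}
    [PseudoMetricSpace X] [NormedAddCommGroup E] [NormedSpace ℝ E] {T : X → X} {g : X → E}
    (hg : Continuous g) {y : X} {m : ℕ} (hy : IsPeriodicPt T m y) (hm : 0 < m) {l : Filter ι}
    {z : ι → X} {p : ι → ℕ} {ε : ι → ℝ} (hε : Tendsto ε l (𝓝 0)) (hp : ∀ n, 0 < p n)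
    (hyp : ∀ n, IsPeriodicPt T (p n) y)
    (hshadow : ∀ n, ∀ i < p n, dist (T^[i] (z n)) (T^[i] y) < ε n) :
    Tendsto (fun n => birkhoffAverage ℝ T g (p n) (z n)) l (𝓝 (birkhoffAverage ℝ T g m y)) :=
  tendsto_const_nhds.congr_dist <| (tendsto_dist_birkhoffAverage_of_shadowing hg
    (hy.finite_range_iterate hm).isCompact hε hshadow).congr fun n => by
      rw [dist_comm, (hyp n).birkhoffAverage_eq ℝ hy (hp n).ne' hm.ne']

theorem tendsto_div_of_le_of_le_one_add_mul {ι : Type*} {l : Filter ι} {x q ε : ι → ℝ}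
    (hε : Tendsto ε l (𝓝 0)) (hx : ∀ n, 0 < x n) (hxq : ∀ n, x n ≤ q n)
    (hqx : ∀ n, q n ≤ (1 + ε n) * x n) : Tendsto (fun n => x n / q n) l (𝓝 1) := by
  have hlow : Tendsto (fun n => 1 / (1 + ε n)) l (𝓝 1) := by
    simpa using (tendsto_const_nhds.add hε).inv₀ (by norm_num : (1 : ℝ) + 0 ≠ 0)
  refine tendsto_of_tendsto_of_tendsto_of_le_of_le hlow tendsto_const_nhds (fun n => ?_)
    (fun n => div_le_one_of_le₀ (hxq n) ((hx n).le.trans (hxq n)))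
  have hq : 0 < q n := (hx n).trans_le (hxq n)
  have hε' : 0 < 1 + ε n := by nlinarith [hx n, hxq n, hqx n]
  rw [div_le_div_iff₀ hε' hq]
  linarith [hqx n]

theorem Linkable.exists_tendsto_birkhoffAverage {X : Type*} [MetricSpace X] {T : X → X}
    {K : Set X} (hlink : Linkable T K) {y₁ y₂ : X} (hy₁ : y₁ ∈ K) (hy₂ : y₂ ∈ K) {m₁ m₂ : ℕ}
    (hm₁ : 0 < m₁) (hm₂ : 0 < m₂) (hym₁ : IsPeriodicPt T m₁ y₁) (hym₂ : IsPeriodicPt T m₂ y₂)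
    {lam : ℝ} (hlam : lam ∈ Set.Icc (0 : ℝ) 1) :
    ∃ (z : ℕ → X) (q : ℕ → ℕ), (∀ n, z n ∈ K ∧ 0 < q n ∧ T^[q n] (z n) = z n) ∧
      ∀ g : X →ᵇ ℝ, Tendsto (fun n => birkhoffAverage ℝ T g (q n) (z n)) atTop
        (𝓝 (lam * birkhoffAverage ℝ T g m₁ y₁ + (1 - lam) * birkhoffAverage ℝ T g m₂ y₂)) := by
  set ε : ℕ → ℝ := fun n => 1 / ((n : ℝ) + 1)
  have hε : Tendsto ε atTop (𝓝 0) := tendsto_one_div_add_atTop_nhds_zero_nat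
  choose p₁ p₂ q₁ q₂ hp₁ hp₂ hper₁ hper₂ z hzK hzper hlow hhigh hq₁ hq₁' hsh₁ hq₂ hq₂' hsh₂ using
    fun n => hlink y₁ hy₁ y₂ hy₂ (ε n) Nat.one_div_pos_of_nat lam hlam
  have hq₁q₂ : ∀ n, q₁ n + p₂ n ≤ q₂ n := fun n => by have := hq₂ n; have := hp₂ n; omega
  have hq₂pos : ∀ n, 0 < q₂ n := fun n => by have := hq₁q₂ n; have := hp₂ n; omega
  refine ⟨z, q₂, fun n => ⟨hzK n, hq₂pos n, hzper n⟩, fun g => ?_⟩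
  have hfill : Tendsto (fun n => ((p₁ n + p₂ n : ℕ) : ℝ) / q₂ n) atTop (𝓝 1) := by
    refine tendsto_div_of_le_of_le_one_add_mul hε (fun n => by have := hp₁ n; positivity)
      (fun n => by have := hq₁ n; have := hq₁q₂ n; exact_mod_cast (by omega : _ ≤ q₂ n))
      (fun n => ?_)
    have h := hq₂' n
    rw [Nat.cast_sub ((Nat.le_add_right _ _).trans (hq₁q₂ n))] at h
    push_cast
    linarith [hq₁' n]
  have hprop : Tendsto (fun n => (p₁ n : ℝ) / (p₁ n + p₂ n)) atTop (𝓝 lam) :=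
    tendsto_of_tendsto_of_tendsto_of_le_of_le (by simpa using tendsto_const_nhds.sub hε)
      (by simpa using tendsto_const_nhds.add hε) hlow hhigh
  have hr₁ : Tendsto (fun n => (p₁ n : ℝ) / q₂ n) atTop (𝓝 lam) := by
    refine (by simpa using hprop.mul hfill : Tendsto _ _ _).congr fun n => ?_
    have : (p₁ n : ℝ) + p₂ n ≠ 0 := by have := hp₁ n; positivity
    field_simp
  have hr₂ : Tendsto (fun n => (p₂ n : ℝ) / q₂ n) atTop (𝓝 (1 - lam)) :=
    (hfill.sub hr₁).congr fun n => by push_cast; ring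
  have hA₁ : Tendsto (fun n => birkhoffAverage ℝ T g (p₁ n) (z n)) atTop
      (𝓝 (birkhoffAverage ℝ T g m₁ y₁)) :=
    hym₁.tendsto_birkhoffAverage_of_shadowing g.continuous hm₁ hε hp₁ hper₁ hsh₁
  have hA₂ : Tendsto (fun n => birkhoffAverage ℝ T g (p₂ n) (T^[q₁ n] (z n))) atTop
      (𝓝 (birkhoffAverage ℝ T g m₂ y₂)) :=
    hym₂.tendsto_birkhoffAverage_of_shadowing g.continuous hm₂ hε hp₂ hper₂ fun n i hi => by
      rw [← iterate_add_apply]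
      exact hsh₂ n i hi
  have herr : Tendsto (fun n => dist (birkhoffAverage ℝ T g (q₂ n) (z n))
      (((p₁ n : ℝ) / q₂ n) • birkhoffAverage ℝ T g (p₁ n) (z n)
        + ((p₂ n : ℝ) / q₂ n) • birkhoffAverage ℝ T g (p₂ n) (T^[q₁ n] (z n)))) atTop (𝓝 0) := by
    refine squeeze_zero (fun n => dist_nonneg) (fun n => dist_birkhoffAverage_smul_add_smul_le
      g.norm_coe_le_norm (hq₁ n) (hq₁q₂ n) (z n)) ?_
    have hgap := ((tendsto_const_nhds (x := (1 : ℝ))).sub hfill).mul_const ‖g‖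
    rw [sub_self, zero_mul] at hgap
    refine hgap.congr fun n => ?_
    rw [Nat.cast_sub (by have := hq₁ n; have := hq₁q₂ n; omega), sub_div,
      div_self (Nat.cast_ne_zero.mpr (hq₂pos n).ne'), Nat.cast_add]
  exact ((hr₁.mul hA₁).add (hr₂.mul hA₂)).congr_dist
    (by simpa only [dist_comm, smul_eq_mul] using herr)

theorem integral_periodicOrbitMeasure {X : Type*} [TopologicalSpace X] [MeasurableSpace X]
    [OpensMeasurableSpace X] (T : X → X) (x : X) {p : ℕ} (hp : 0 < p) (f : X →ᵇ ℝ) :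
    ∫ w, f w ∂(periodicOrbitMeasure T x p : Measure X) = birkhoffAverage ℝ T f p x := by
  change ∫ w, f w ∂(((max p 1 : ℕ) : ℝ≥0∞)⁻¹ • ∑ i ∈ Finset.range (max p 1),
    Measure.dirac (T^[i] x)) = _
  rw [max_eq_left hp, integral_smul_measure,
    integral_finsetSum_measure fun i _ => f.integrable _]
  simp [integral_dirac' _ _ f.continuous.stronglyMeasurable, birkhoffAverage, birkhoffSum,
    ENNReal.toReal_inv]

theorem MeasureTheory.FiniteMeasure.integral_smul_add_smul {X : Type*} [TopologicalSpace X]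
    [MeasurableSpace X] [OpensMeasurableSpace X] (a b : ℝ≥0) (μ ν : FiniteMeasure X)
    (f : X →ᵇ ℝ) :
    ∫ w, f w ∂(a • μ + b • ν : FiniteMeasure X)
      = a * ∫ w, f w ∂(μ : Measure X) + b * ∫ w, f w ∂(ν : Measure X) := by
  rw [toMeasure_add, toMeasure_smul, toMeasure_smul,
    integral_add_measure (f.integrable _) (f.integrable _),
    integral_smul_nnreal_measure, integral_smul_nnreal_measure, NNReal.smul_def,
    NNReal.smul_def, smul_eq_mul, smul_eq_mul]

theorem smul_add_smul_mem_closure_perMeasures {X : Type*} [MetricSpace X] [MeasurableSpace X]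
    [BorelSpace X] {T : X → X} {K : Set X} (hlink : Linkable T K) {μ ν : ProbabilityMeasure X}
    (hμ : μ ∈ perMeasures T K) (hν : ν ∈ perMeasures T K) {a b : ℝ≥0} (hab : a + b = 1) :
    a • μ.toFiniteMeasure + b • ν.toFiniteMeasure
      ∈ closure (ProbabilityMeasure.toFiniteMeasure '' perMeasures T K) := by
  obtain ⟨y₁, hy₁, m₁, hm₁, hym₁, rfl⟩ := hμ
  obtain ⟨y₂, hy₂, m₂, hm₂, hym₂, rfl⟩ := hν
  have hb : (b : ℝ) = 1 - a := eq_sub_of_add_eq' (by exact_mod_cast hab)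
  obtain ⟨z, q, hzq, hlim⟩ := hlink.exists_tendsto_birkhoffAverage hy₁ hy₂ hm₁ hm₂ hym₁ hym₂
    (lam := a) ⟨a.coe_nonneg, by linarith [b.coe_nonneg]⟩
  refine mem_closure_of_tendsto (b := atTop)
    (f := fun n => (periodicOrbitMeasure T (z n) (q n)).toFiniteMeasure)
    ?_ (Eventually.of_forall fun n =>
      ⟨_, ⟨z n, (hzq n).1, q n, (hzq n).2.1, (hzq n).2.2, rfl⟩, rfl⟩)
  rw [FiniteMeasure.tendsto_iff_forall_integral_tendsto]
  intro g
  simp only [FiniteMeasure.integral_smul_add_smul,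
    ProbabilityMeasure.toMeasure_comp_toFiniteMeasure_eq_toMeasure,
    integral_periodicOrbitMeasure _ _ hm₁, integral_periodicOrbitMeasure _ _ hm₂, hb]
  exact (hlim g).congr fun n => (integral_periodicOrbitMeasure _ _ (hzq n).2.1 g).symm

theorem convex_closure_of_smul_add_smul_mem_closure {𝕜 E : Type*} [Semiring 𝕜] [PartialOrder 𝕜]
    [AddCommMonoid E] [Module 𝕜 E] [TopologicalSpace E] [ContinuousAdd E]
    [ContinuousConstSMul 𝕜 E] {s : Set E}
    (h : ∀ x ∈ s, ∀ y ∈ s, ∀ ⦃a b : 𝕜⦄, 0 ≤ a → 0 ≤ b → a + b = 1 → a • x + b • y ∈ closure s) :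
    Convex 𝕜 (closure s) := by
  intro x hx y hy a b ha hb hab
  simpa only [closure_closure] using map_mem_closure₂ (f := fun u v : E => a • u + b • v)
    ((continuous_fst.const_smul a).add (continuous_snd.const_smul b)) hx hy
    fun u hu v hv => h u hu v hv ha hb hab

theorem stmt11_general {X : Type*} [MetricSpace X] [MeasurableSpace X] [BorelSpace X]
    (T : X → X) (K : Set X)
    (hlink : Linkable T K) :
    closure (convexHull ℝ≥0 (ProbabilityMeasure.toFiniteMeasure '' perMeasures T K))
      ⊆ closure (ProbabilityMeasure.toFiniteMeasure '' perMeasures T K) := by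
  have hconv : Convex ℝ≥0 (closure (ProbabilityMeasure.toFiniteMeasure '' perMeasures T K)) :=
    convex_closure_of_smul_add_smul_mem_closure <| by
      rintro _ ⟨μ, hμ, rfl⟩ _ ⟨ν, hν, rfl⟩ a b - - hab
      exact smul_add_smul_mem_closure_perMeasures hlink hμ hν hab
  exact (closure_mono (convexHull_min subset_closure hconv)).trans closure_closure.subset

theorem stmt11 {X : Type*} [MetricSpace X] [TopologicalSpace.SeparableSpace X]
    [CompleteSpace X] [MeasurableSpace X] [BorelSpace X]
    (hd : ∃ C, ∀ a b : X, dist a b ≤ C)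
    (T : X → X) (hT : Continuous T) (K : Set X)
    (hK : ∀ y ∈ K, ∃ p, 0 < p ∧ T^[p] y = y)
    (hlink : Linkable T K) :
    closure (convexHull ℝ≥0 (ProbabilityMeasure.toFiniteMeasure '' perMeasures T K))
      ⊆ closure (ProbabilityMeasure.toFiniteMeasure '' perMeasures T K) :=
  stmt11_general T K hlink
end

section
/- Let (X,T) be a Polish dynamical system with T uniformly continuous and {D_0,...,D_{k−1}} a periodic decomposition of X. If the set of invariant measures of periodic points of T^k lying in D_0 is dense in the ergodic measures of (X,T^k), then the set of invariant measures of periodic points of T is dense in the ergodic measures of (X,T). -/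
open MeasureTheory Filter Topology
open scoped ENNReal NNReal

/-!
With respect to `T^[k]`, an ergodic measure `μ` of `T` splits into at most `k` ergodic pieces:
for every `T^[k]`-invariant set `s` the measure `∑_{i<k} (T^i)_* (μ|s)` is `T`-invariant and
absolutely continuous with respect to `μ`, hence a multiple of `μ`, which forces `μ s ≥ 1/k` when `μ s ≠ 0`. Hence some invariant set `A`
is an atom of the `T^[k]`-invariant σ-algebra, the normalised restriction `ν` of `μ` to `A` is
`T^[k]`-ergodic, and `(1/k) ∑_{i<k} (T^i)_* ν = μ`. This averaging map is weak* continuous and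
sends the orbit measure of a `T^[k]`-periodic point of period `p` to its orbit measure as a
`T`-periodic point of period `k p`, so approximating `ν` by `T^[k]`-periodic orbit measures
approximates `μ` by `T`-periodic ones.
-/

open scoped BoundedContinuousFunction

section IterateAverage

variable {α : Type*} [MeasurableSpace α] {f : α → α} {k : ℕ}

noncomputable def iterateAvg (f : α → α) (k : ℕ) (μ : Measure α) : Measure α :=
  (k : ℝ≥0∞)⁻¹ • ∑ i ∈ Finset.range k, μ.map f^[i]

theorem isProbabilityMeasure_iterateAvg (hf : Measurable f) (hk : k ≠ 0) (μ : Measure α)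
    [IsProbabilityMeasure μ] : IsProbabilityMeasure (iterateAvg f k μ) := by
  constructor
  simp [iterateAvg, Measure.finsetSum_apply, Measure.map_apply (hf.iterate _) MeasurableSet.univ,
    ENNReal.inv_mul_cancel (Nat.cast_ne_zero.2 hk) (ENNReal.natCast_ne_top k)]

theorem measurePreserving_sum_map_iterate (hf : Measurable f) {μ : Measure α}
    (hμ : MeasurePreserving f^[k] μ μ) :
    MeasurePreserving f (∑ i ∈ Finset.range k, μ.map f^[i])
      (∑ i ∈ Finset.range k, μ.map f^[i]) := by
  refine ⟨hf, ?_⟩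
  rw [Measure.map_finset_sum hf.aemeasurable]
  have hshift : ∀ i, (μ.map f^[i]).map f = μ.map f^[i + 1] := fun i => by
    rw [Measure.map_map hf (hf.iterate i), ← Function.iterate_succ']
  simp only [hshift]
  cases k with
  | zero => rfl
  | succ n =>
    rw [Finset.sum_range_succ, Finset.sum_range_succ', hμ.map_eq, Function.iterate_zero,
      Measure.map_id]

theorem Ergodic.exists_sum_map_iterate_restrict_eq_smul {μ : Measure α} [IsFiniteMeasure μ]
    (hμ : Ergodic f μ) {s : Set α} (hs : MeasurableSet s) (hfs : f^[k] ⁻¹' s = s) :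
    ∃ c : ℝ≥0∞, ∑ i ∈ Finset.range k, (μ.restrict s).map f^[i] = c • μ := by
  have hs_inv : MeasurePreserving f^[k] (μ.restrict s) (μ.restrict s) := by
    simpa only [hfs] using (hμ.toMeasurePreserving.iterate k).restrict_preimage hs
  refine hμ.eq_smul_of_absolutelyContinuous
    (measurePreserving_sum_map_iterate hμ.measurable hs_inv) ?_
  refine Measure.AbsolutelyContinuous.mk fun t ht hμt => ?_
  rw [Measure.finsetSum_apply]
  refine Finset.sum_eq_zero fun i _ => ?_
  rw [Measure.map_apply (hμ.measurable.iterate i) ht]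
  refine nonpos_iff_eq_zero.1 ?_
  calc μ.restrict s (f^[i] ⁻¹' t) ≤ μ (f^[i] ⁻¹' t) := Measure.restrict_apply_le s _
    _ = μ t := (hμ.toMeasurePreserving.iterate i).measure_preimage ht.nullMeasurableSet
    _ = 0 := hμt

theorem Ergodic.inv_le_measure_of_preimage_iterate_eq {μ : Measure α} [IsProbabilityMeasure μ]
    (hμ : Ergodic f μ) (hk : k ≠ 0) {s : Set α} (hs : MeasurableSet s) (hfs : f^[k] ⁻¹' s = s)
    (hs₀ : μ s ≠ 0) : (k : ℝ≥0∞)⁻¹ ≤ μ s := by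
  obtain ⟨c, hc⟩ := hμ.exists_sum_map_iterate_restrict_eq_smul hs hfs
  have hc_univ : c = k * μ s := by
    simpa [Measure.finsetSum_apply, Measure.map_apply (hμ.measurable.iterate _)
      MeasurableSet.univ] using (congrArg (· Set.univ) hc).symm
  have hc_one : 1 ≤ c := by
    refine (ENNReal.mul_le_mul_iff_left hs₀ (measure_ne_top μ s)).1 ?_
    calc 1 * μ s = (μ.restrict s).map f^[0] s := by simp [hs]
      _ ≤ ∑ i ∈ Finset.range k, (μ.restrict s).map f^[i] s :=
        Finset.single_le_sum (f := fun i => (μ.restrict s).map f^[i] s) (fun i _ => zero_le)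
          (Finset.mem_range.2 (Nat.pos_of_ne_zero hk))
      _ = c * μ s := by rw [← Measure.finsetSum_apply, hc, Measure.smul_apply, smul_eq_mul]
  rw [ENNReal.inv_le_iff_le_mul (fun _ => Nat.cast_ne_zero.2 hk) (fun _ => hs₀), ← hc_univ]
  exact hc_one

theorem exists_preErgodic_restrict {μ : Measure α} [IsFiniteMeasure μ] [NeZero μ] {c₀ : ℝ≥0∞}
    (hc₀ : c₀ ≠ 0) (hbound : ∀ s, MeasurableSet s → f ⁻¹' s = s → μ s ≠ 0 → c₀ ≤ μ s) :
    ∃ A, MeasurableSet A ∧ f ⁻¹' A = A ∧ μ A ≠ 0 ∧ PreErgodic f (μ.restrict A) := by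
  set c := sInf {r | ∃ s, MeasurableSet s ∧ f ⁻¹' s = s ∧ μ s ≠ 0 ∧ μ s = r}
  have hc_le : ∀ s, MeasurableSet s → f ⁻¹' s = s → μ s ≠ 0 → c ≤ μ s :=
    fun s hs hfs hs₀ => sInf_le ⟨s, hs, hfs, hs₀, rfl⟩
  have hc₀_le : c₀ ≤ c := le_sInf <| by
    rintro _ ⟨s, hs, hfs, hs₀, rfl⟩
    exact hbound s hs hfs hs₀
  have hc_top : c ≠ ⊤ := ne_top_of_le_ne_top (measure_ne_top μ Set.univ)
    (hc_le _ MeasurableSet.univ rfl (NeZero.ne' (μ Set.univ)).symm)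
  have hc_pos : c ≠ 0 := (lt_of_lt_of_le (pos_iff_ne_zero.2 hc₀) hc₀_le).ne'
  -- an invariant set of measure `< 2c` cannot split into two invariant sets of positive measure
  obtain ⟨_, ⟨A, hA, hfA, hA₀, rfl⟩, hA_lt⟩ := sInf_lt_iff.1 (ENNReal.lt_add_right hc_top hc_pos)
  refine ⟨A, hA, hfA, hA₀, ⟨fun s hs hfs => ?_⟩⟩
  rw [eventuallyConst_set', ae_eq_empty, ae_eq_univ, Measure.restrict_apply hs,
    Measure.restrict_apply hs.compl, ← Set.sdiff_eq_compl_inter]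
  by_contra! h
  have hsplit : μ (s ∩ A) + μ (A \ s) = μ A := by
    rw [Set.inter_comm]
    exact measure_inter_add_sdiff A hs
  exact hA_lt.not_ge (hsplit ▸ add_le_add
    (hc_le _ (hs.inter hA) (by rw [Set.preimage_inter, hfs, hfA]) h.1)
    (hc_le _ (hA.diff hs) (by rw [Set.preimage_sdiff, hfs, hfA]) h.2))

theorem Ergodic.exists_ergodic_iterate_iterateAvg_eq {μ : Measure α} [IsProbabilityMeasure μ]
    (hμ : Ergodic f μ) (hk : k ≠ 0) :
    ∃ ν : Measure α, IsProbabilityMeasure ν ∧ Ergodic f^[k] ν ∧ iterateAvg f k ν = μ := by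
  obtain ⟨A, hA, hfA, hA₀, hA_erg⟩ := exists_preErgodic_restrict (f := f^[k]) (μ := μ)
    (ENNReal.inv_ne_zero.2 (ENNReal.natCast_ne_top k))
    fun s hs hfs hs₀ => hμ.inv_le_measure_of_preimage_iterate_eq hk hs hfs hs₀
  set ν := (μ A)⁻¹ • μ.restrict A
  have hν : IsProbabilityMeasure ν := ⟨by
    simp [ν, ENNReal.inv_mul_cancel hA₀ (measure_ne_top μ A)]⟩
  have hν_erg : Ergodic f^[k] ν := by
    refine ⟨MeasurePreserving.smul_measure ?_ _, hA_erg.smul_measure _⟩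
    simpa only [hfA] using (hμ.toMeasurePreserving.iterate k).restrict_preimage hA
  obtain ⟨c, hc⟩ := hμ.exists_sum_map_iterate_restrict_eq_smul hA hfA
  have hνμ : iterateAvg f k ν = ((k : ℝ≥0∞)⁻¹ * ((μ A)⁻¹ * c)) • μ := by
    simp only [iterateAvg, ν, Measure.map_smul, ← Finset.smul_sum, hc, smul_smul]
  have hprob := isProbabilityMeasure_iterateAvg hμ.measurable hk ν
  rw [hνμ] at hprob
  have hscalar : (k : ℝ≥0∞)⁻¹ * ((μ A)⁻¹ * c) = 1 := by
    have h := hprob.measure_univ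
    rwa [Measure.smul_apply, measure_univ, smul_eq_mul, mul_one] at h
  exact ⟨ν, hν, hν_erg, by rw [hνμ, hscalar, one_smul]⟩

end IterateAverage

section WeakTopology

variable {α : Type*} [TopologicalSpace α] [MeasurableSpace α] [BorelSpace α] {f : α → α} {k : ℕ}

noncomputable def iterateAvgProb (hf : Measurable f) (hk : k ≠ 0) (μ : ProbabilityMeasure α) :
    ProbabilityMeasure α :=
  ⟨iterateAvg f k μ, isProbabilityMeasure_iterateAvg hf hk μ⟩

theorem integral_iterateAvg (hf : Measurable f) (μ : Measure α) [IsFiniteMeasure μ]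
    (g : α →ᵇ ℝ) :
    ∫ x, g x ∂(iterateAvg f k μ) = (k : ℝ)⁻¹ * ∑ i ∈ Finset.range k, ∫ x, g (f^[i] x) ∂μ := by
  rw [iterateAvg, integral_smul_measure, integral_finsetSum_measure fun i _ => g.integrable _]
  simp only [ENNReal.toReal_inv, ENNReal.toReal_natCast, smul_eq_mul]
  congr 1
  refine Finset.sum_congr rfl fun i _ => ?_
  exact integral_map (hf.iterate i).aemeasurable g.continuous.aestronglyMeasurable

theorem continuous_iterateAvgProb (hf : Continuous f) (hk : k ≠ 0) :
    Continuous (iterateAvgProb hf.measurable hk) := by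
  refine ProbabilityMeasure.continuous_iff_forall_continuous_integral.2 fun g => ?_
  simp only [iterateAvgProb, ProbabilityMeasure.coe_mk, integral_iterateAvg hf.measurable]
  refine continuous_const.mul (continuous_finsetSum _ fun i _ => ?_)
  exact ProbabilityMeasure.continuous_integral_boundedContinuousFunction
    (g.compContinuous ⟨f^[i], hf.iterate i⟩)

end WeakTopology

theorem Finset.sum_range_mul_eq_sum_sum {M : Type*} [AddCommMonoid M] (h : ℕ → M) (k p : ℕ) :
    ∑ j ∈ Finset.range (k * p), h j =
      ∑ i ∈ Finset.range k, ∑ m ∈ Finset.range p, h (i + k * m) := by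
  induction p with
  | zero => simp
  | succ p ih =>
    rw [Nat.mul_succ, Finset.sum_range_add, ih]
    simp only [Finset.sum_range_succ, Finset.sum_add_distrib, add_comm]

section PeriodicOrbits

variable {X : Type*} [MeasurableSpace X] {T : X → X}

theorem coe_periodicOrbitMeasure (x : X) {p : ℕ} (hp : p ≠ 0) :
    (periodicOrbitMeasure T x p : Measure X) =
      (p : ℝ≥0∞)⁻¹ • ∑ i ∈ Finset.range p, Measure.dirac (T^[i] x) := by
  rw [periodicOrbitMeasure, avgDirac, ProbabilityMeasure.coe_mk,
    Nat.max_eq_left (Nat.pos_of_ne_zero hp)]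

theorem iterateAvg_periodicOrbitMeasure (hT : Measurable T) {k p : ℕ} (hk : k ≠ 0) (hp : p ≠ 0)
    (x : X) :
    iterateAvg T k (periodicOrbitMeasure T^[k] x p) = periodicOrbitMeasure T x (k * p) := by
  have hmap : ∀ i m,
      (Measure.dirac ((T^[k])^[m] x)).map T^[i] = Measure.dirac (T^[i + k * m] x) := fun i m => by
    rw [Measure.map_dirac' (hT.iterate i), ← Function.iterate_mul, Function.iterate_add_apply]
  rw [coe_periodicOrbitMeasure x hp, coe_periodicOrbitMeasure x (Nat.mul_ne_zero hk hp),
    iterateAvg]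
  simp only [Measure.map_smul, Measure.map_finset_sum (hT.iterate _).aemeasurable, hmap,
    ← Finset.smul_sum, smul_smul]
  rw [Finset.sum_range_mul_eq_sum_sum (fun j => Measure.dirac (T^[j] x)), Nat.cast_mul,
    ENNReal.mul_inv (.inl (Nat.cast_ne_zero.2 hk)) (.inl (ENNReal.natCast_ne_top k))]

theorem iterateAvgProb_image_perMeasures_subset (hT : Measurable T) {k : ℕ} (hk : k ≠ 0)
    (K : Set X) : iterateAvgProb hT hk '' perMeasures T^[k] K ⊆ perMeasures T Set.univ := by
  rintro _ ⟨_, ⟨x, -, p, hp, hx, rfl⟩, rfl⟩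
  refine ⟨x, trivial, k * p, Nat.mul_pos (Nat.pos_of_ne_zero hk) hp,
    by rwa [Function.iterate_mul], ?_⟩
  exact Subtype.ext (iterateAvg_periodicOrbitMeasure hT hk hp.ne' x)

end PeriodicOrbits

theorem stmt12_general {X : Type*} [MetricSpace X] [MeasurableSpace X] [BorelSpace X]
    (T : X → X) (hT : UniformContinuous T) (k : ℕ) (hk : 0 < k)
    (D : ℕ → Set X)
    (hdense : {μ : ProbabilityMeasure X | Ergodic (T^[k]) μ.toMeasure}
      ⊆ closure (perMeasures (T^[k]) (D 0))) :
    {μ : ProbabilityMeasure X | Ergodic T μ.toMeasure}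
      ⊆ closure (perMeasures T Set.univ) := by
  rintro μ (hμ : Ergodic T μ)
  obtain ⟨ν, hν, hν_erg, hνμ⟩ := hμ.exists_ergodic_iterate_iterateAvg_eq hk.ne'
  have hν_mem : (⟨ν, hν⟩ : ProbabilityMeasure X) ∈ closure (perMeasures T^[k] (D 0)) :=
    hdense hν_erg
  have hμ_eq : iterateAvgProb hT.continuous.measurable hk.ne' ⟨ν, hν⟩ = μ := Subtype.ext hνμ
  rw [← hμ_eq]
  exact closure_mono (iterateAvgProb_image_perMeasures_subset _ hk.ne' _)
    (image_closure_subset_closure_image (continuous_iterateAvgProb hT.continuous hk.ne')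
      (Set.mem_image_of_mem _ hν_mem))

theorem stmt12 {X : Type*} [MetricSpace X] [TopologicalSpace.SeparableSpace X]
    [CompleteSpace X] [MeasurableSpace X] [BorelSpace X]
    (hd : ∃ C, ∀ a b : X, dist a b ≤ C)
    (T : X → X) (hT : UniformContinuous T) (k : ℕ) (hk : 0 < k)
    (D : ℕ → Set X) (hDclosed : ∀ i < k, IsClosed (D i))
    (hDcover : (⋃ i ∈ Set.Iio k, D i) = Set.univ)
    (hDmap : ∀ i < k, T '' D i ⊆ D ((i + 1) % k))
    (hdense : {μ : ProbabilityMeasure X | Ergodic (T^[k]) μ.toMeasure}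
      ⊆ closure (perMeasures (T^[k]) (D 0))) :
    {μ : ProbabilityMeasure X | Ergodic T μ.toMeasure}
      ⊆ closure (perMeasures T Set.univ) :=
  stmt12_general T hT k hk D hdense
end
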